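/- arXiv:2112.12732 — 11 statements merged into one kernel-verified Lean document; each statement's English description precedes it below -/
import Mathlib

section
/- For any prime p > 2 and integer j with 0 ≤ j ≤ (p-1)/2, one has C(3j, j) · C(p+2j, 3j+1) ≡ (p·(-1)^j/(3j+1)) · (1 + p·H_{2j} - p·H_j) (mod p^3). -/
/-!
By `C(3j,j) C(p+2j,3j+1) = p/(3j+1) · C(p+2j,2j) · C(p-1,j)`, with
`C(p+2j,2j) = ∏_{k ≤ 2j} (1 + p/k)` and `C(p-1,j) = (-1)^j ∏_{k ≤ j} (1 - p/k)`, the claim is about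
a product `∏ (1 + p uᵢ)` of `3j` factors with `p`-adic units `uᵢ = ±1/k`. In `ℤ_p` such a product
is `1 + p e₁ + p² e₂` modulo `p³`, where `e₁ = H_{2j} - H_j`. If `p ∤ 3j+1` the prefactor already
contributes one power of `p` and the congruence holds modulo `p²` inside. Otherwise `p = 3j+1`
and `e₂` must vanish modulo `p`: `2 e₂ = e₁² - ∑ uᵢ²`, where `e₁ ≡ 0` by the symmetry `k ↦ p - k`
of `{j+1, …, 2j}`, and `∑ uᵢ² ≡ ∑_{k < p} k⁻² ≡ ∑_{x ∈ 𝔽_p} x² ≡ 0` since `p > 3`.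
-/

def pCong (p : ℕ) (m : ℕ) (a b : ℚ) : Prop :=
  ∃ r : ℚ, a - b = (p : ℚ) ^ m * r ∧ ¬ (p ∣ r.den)

def H (n : ℕ) : ℚ := ∑ k ∈ Finset.range n, (1 : ℚ) / (k + 1)

open Finset

theorem three_mul_add_one_mul_choose_mul_choose {n j : ℕ} (hj : j < n) :
    (3 * j + 1) * (3 * j).choose j * (n + 2 * j).choose (3 * j + 1)
      = n * (n + 2 * j).choose (2 * j) * (n - 1).choose j := by
  obtain ⟨m, rfl⟩ := Nat.exists_eq_add_of_lt hj
  have hsymm : (3 * j + 1).choose (j + 1) = (3 * j + 1).choose (2 * j) :=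
    Nat.choose_symm_of_eq_add (by ring)
  have hmul := Nat.choose_mul (n := j + m + 1 + 2 * j) (k := 3 * j + 1) (s := 2 * j) (by omega)
  rw [show j + m + 1 + 2 * j - 2 * j = j + m + 1 by omega,
    show 3 * j + 1 - 2 * j = j + 1 by omega] at hmul
  calc (3 * j + 1) * (3 * j).choose j * (j + m + 1 + 2 * j).choose (3 * j + 1)
      = (j + 1) * ((j + m + 1 + 2 * j).choose (3 * j + 1) * (3 * j + 1).choose (2 * j)) := by
        rw [Nat.add_one_mul_choose_eq, hsymm]; ring
    _ = (j + m + 1 + 2 * j).choose (2 * j) * ((j + m + 1) * (j + m + 1 - 1).choose j) := by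
        rw [hmul, Nat.add_sub_cancel, Nat.add_one_mul_choose_eq]; ring
    _ = _ := by ring

section ChooseProd

variable {K : Type*} [Field K] [CharZero K]

theorem Nat.cast_add_choose_eq_prod (n m : ℕ) :
    ((n + m).choose m : K) = ∏ k ∈ range m, (1 + (n : K) / (k + 1)) := by
  induction m with
  | zero => simp
  | succ m ih =>
    have h : ((n + (m + 1)).choose (m + 1) : K) * (m + 1) = (n + m + 1) * (n + m).choose m := by
      exact_mod_cast (Nat.add_one_mul_choose_eq (n + m) m).symm
    rw [prod_range_succ, ← ih, (eq_div_iff (Nat.cast_add_one_ne_zero m)).mpr h]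
    field_simp
    ring

theorem Nat.cast_sub_one_choose_eq_prod {n j : ℕ} (hj : j < n) :
    ((n - 1).choose j : K) = (-1) ^ j * ∏ k ∈ range j, (1 - (n : K) / (k + 1)) := by
  induction j with
  | zero => simp
  | succ j ih =>
    have h : ((n - 1).choose (j + 1) : K) * (j + 1) = (n - 1).choose j * (n - (j + 1)) := by
      have := congrArg (Nat.cast : ℕ → K) (Nat.choose_succ_right_eq (n - 1) j)
      push_cast [Nat.sub_sub, Nat.cast_sub (by omega : 1 + j ≤ n)] at this
      linear_combination this
    rw [prod_range_succ, pow_succ, (eq_div_iff (Nat.cast_add_one_ne_zero j)).mpr h, ih (by omega)]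
    field_simp
    ring

end ChooseProd

section Ultrametric

variable {R ι : Type*} [SeminormedCommRing R] [NormOneClass R] [IsUltrametricDist R]
  {x : R} {u : ι → R} {s : Finset ι}

open IsUltrametricDist

theorem norm_prod_one_add_sub_one_le (hx : ‖x‖ ≤ 1) (hu : ∀ i ∈ s, ‖u i‖ ≤ 1) :
    ‖∏ i ∈ s, (1 + x * u i) - 1‖ ≤ ‖x‖ := by
  induction s using Finset.cons_induction with
  | empty => simp
  | cons a s ha ih =>
    rw [forall_mem_cons] at hu
    have ih := ih hu.2
    set P := ∏ i ∈ s, (1 + x * u i)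
    have hP : ‖P‖ ≤ 1 := by
      simpa using (norm_add_le_max (P - 1) 1).trans (max_le (ih.trans hx) norm_one.le)
    have hxuP : ‖x * u a * P‖ ≤ ‖x‖ := calc
      ‖x * u a * P‖ ≤ ‖x‖ * ‖u a‖ * ‖P‖ := norm_mul₃_le
      _ ≤ ‖x‖ * 1 * 1 := by gcongr; exact hu.1
      _ = ‖x‖ := by ring
    rw [prod_cons, show (1 + x * u a) * P - 1 = (P - 1) + x * u a * P by ring]
    exact (norm_add_le_max _ _).trans (max_le ih hxuP)

theorem norm_prod_one_add_sub_linear_le (hx : ‖x‖ ≤ 1) (hu : ∀ i ∈ s, ‖u i‖ ≤ 1) :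
    ‖∏ i ∈ s, (1 + x * u i) - 1 - x * ∑ i ∈ s, u i‖ ≤ ‖x‖ ^ 2 := by
  induction s using Finset.cons_induction with
  | empty => simp
  | cons a s ha ih =>
    rw [forall_mem_cons] at hu
    set P := ∏ i ∈ s, (1 + x * u i)
    have hxuP : ‖x * u a * (P - 1)‖ ≤ ‖x‖ ^ 2 := calc
      ‖x * u a * (P - 1)‖ ≤ ‖x‖ * ‖u a‖ * ‖P - 1‖ := norm_mul₃_le
      _ ≤ ‖x‖ * 1 * ‖x‖ := by gcongr; exacts [hu.1, norm_prod_one_add_sub_one_le hx hu.2]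
      _ = ‖x‖ ^ 2 := by ring
    rw [prod_cons, sum_cons, show (1 + x * u a) * P - 1 - x * (u a + ∑ i ∈ s, u i)
      = (P - 1 - x * ∑ i ∈ s, u i) + x * u a * (P - 1) by ring]
    exact (norm_add_le_max _ _).trans (max_le (ih hu.2) hxuP)

/-- The second elementary symmetric function of the `u i` is `((∑ u i)² - ∑ u i²) / 2`; the
factor `2` is kept on the other side so that no division is needed. -/
theorem norm_prod_one_add_sub_quadratic_le (hx : ‖x‖ ≤ 1) (hu : ∀ i ∈ s, ‖u i‖ ≤ 1) :
    ‖2 * (∏ i ∈ s, (1 + x * u i) - 1 - x * ∑ i ∈ s, u i)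
      - x ^ 2 * ((∑ i ∈ s, u i) ^ 2 - ∑ i ∈ s, u i ^ 2)‖ ≤ ‖x‖ ^ 3 := by
  induction s using Finset.cons_induction with
  | empty => simp
  | cons a s ha ih =>
    rw [forall_mem_cons] at hu
    set P := ∏ i ∈ s, (1 + x * u i)
    set S := ∑ i ∈ s, u i
    have hxuP : ‖2 * x * u a * (P - 1 - x * S)‖ ≤ ‖x‖ ^ 3 := calc
      ‖2 * x * u a * (P - 1 - x * S)‖ ≤ ‖(2 : R)‖ * ‖x‖ * ‖u a‖ * ‖P - 1 - x * S‖ := by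
        refine (norm_mul_le _ _).trans ?_
        gcongr
        exact norm_mul₃_le
      _ ≤ 1 * ‖x‖ * 1 * ‖x‖ ^ 2 := by
        gcongr
        exacts [by exact_mod_cast norm_natCast_le_one R 2, hu.1,
          norm_prod_one_add_sub_linear_le hx hu.2]
      _ = ‖x‖ ^ 3 := by ring
    rw [prod_cons, sum_cons, sum_cons, show 2 * ((1 + x * u a) * P - 1 - x * (u a + S))
      - x ^ 2 * ((u a + S) ^ 2 - (u a ^ 2 + ∑ i ∈ s, u i ^ 2))
      = (2 * (P - 1 - x * S) - x ^ 2 * (S ^ 2 - ∑ i ∈ s, u i ^ 2)) + 2 * x * u a * (P - 1 - x * S)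
      by ring]
    exact (norm_add_le_max _ _).trans (max_le (ih hu.2) hxuP)

end Ultrametric

theorem sum_range_reflect_neg {R M : Type*} [CommRing R] [AddCommMonoid M] (g : R → M) {c d : R}
    {n : ℕ} (h : c + d + n = 1) : ∑ k ∈ range n, g (c + k) = ∑ k ∈ range n, g (-(d + k)) := by
  rw [← sum_range_reflect]
  refine sum_congr rfl fun k hk => congrArg g ?_
  rw [Nat.sub_sub, Nat.cast_sub (by simpa [add_comm] using mem_range.1 hk)]
  push_cast
  linear_combination h

theorem sum_range_inv_eq_zero {F : Type*} [Field F] (h2 : (2 : F) ≠ 0) {c : F} {n : ℕ}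
    (h : 2 * c + n = 1) : ∑ k ∈ range n, (c + k)⁻¹ = 0 := by
  have hneg := sum_range_reflect_neg (·⁻¹) (c := c) (d := c) (n := n) (by linear_combination h)
  simp only [inv_neg, sum_neg_distrib] at hneg
  have h2sum : (2 : F) * ∑ k ∈ range n, (c + k)⁻¹ = 0 := by linear_combination hneg
  exact (mul_eq_zero.1 h2sum).resolve_left h2

theorem ZMod.sum_range_eq_sum_univ {n : ℕ} [NeZero n] {M : Type*} [AddCommMonoid M]
    (g : ZMod n → M) : ∑ k ∈ range n, g k = ∑ x : ZMod n, g x := by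
  rw [← Fin.sum_univ_eq_sum_range (fun k => g k)]
  refine Fintype.sum_bijective _ ((Fintype.bijective_iff_surjective_and_card _).2 ⟨?_, by simp⟩)
    _ _ fun _ => rfl
  exact fun x => ⟨⟨x.val, x.val_lt⟩, ZMod.natCast_zmod_val x⟩

theorem ZMod.sum_range_inv_sq_eq_zero {p : ℕ} [Fact p.Prime] (hp : 3 < p) :
    ∑ k ∈ range p, ((k : ZMod p))⁻¹ ^ 2 = 0 := by
  rw [ZMod.sum_range_eq_sum_univ (fun x => x⁻¹ ^ 2)]
  exact (Equiv.sum_comp (Equiv.inv (ZMod p)) (· ^ 2)).trans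
    (FiniteField.sum_pow_lt_card_sub_one _ 2 (by rw [ZMod.card]; omega))

section SpecialPrime

variable {p j : ℕ} [Fact p.Prime] (hpj : p = 3 * j + 1)
include hpj

theorem three_lt_of_eq_three_mul_add_one : 3 < p := by
  have hp : (3 * j + 1).Prime := hpj ▸ Fact.out
  rcases (by omega : j = 0 ∨ j = 1 ∨ 2 ≤ j) with rfl | rfl | hj
  · exact absurd hp Nat.not_prime_one
  · exact absurd hp (by norm_num)
  · omega

theorem sum_range_two_mul_inv_eq :
    ∑ k ∈ range (2 * j), ((k : ZMod p) + 1)⁻¹ = ∑ k ∈ range j, ((k : ZMod p) + 1)⁻¹ := by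
  have h2 : (2 : ZMod p) ≠ 0 := by
    rw [← Nat.cast_ofNat, Ne, ZMod.natCast_eq_zero_iff]
    exact fun h => absurd (Nat.le_of_dvd two_pos h)
      (by have := three_lt_of_eq_three_mul_add_one hpj; omega)
  have hp0 : ((3 * j + 1 : ℕ) : ZMod p) = 0 := hpj ▸ ZMod.natCast_self p
  push_cast at hp0
  rw [two_mul, sum_range_add, add_eq_left]
  convert sum_range_inv_eq_zero h2 (c := (j : ZMod p) + 1) (n := j) (by linear_combination hp0)
    using 2
  push_cast; ring

theorem sum_range_inv_sq_add_sum_range_two_mul_inv_sq :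
    ∑ k ∈ range j, ((k : ZMod p) + 1)⁻¹ ^ 2 + ∑ k ∈ range (2 * j), ((k : ZMod p) + 1)⁻¹ ^ 2 = 0 := by
  have hp0 : ((3 * j + 1 : ℕ) : ZMod p) = 0 := hpj ▸ ZMod.natCast_self p
  push_cast at hp0
  have hrefl := sum_range_reflect_neg (fun x : ZMod p => x⁻¹ ^ 2) (c := 2 * j + 1) (d := 1) (n := j)
    (by linear_combination hp0)
  simp only [inv_neg, neg_sq] at hrefl
  have hfull := ZMod.sum_range_inv_sq_eq_zero (three_lt_of_eq_three_mul_add_one hpj)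
  rw [show range p = range (2 * j + j + 1) by rw [hpj]; ring_nf, sum_range_succ',
    sum_range_add] at hfull
  push_cast at hfull
  simp only [add_assoc, add_comm (1 : ZMod p)] at hfull hrefl
  rwa [hrefl, inv_zero, zero_pow two_ne_zero, add_zero, add_comm] at hfull

end SpecialPrime

namespace PadicInt

variable {p : ℕ} [Fact p.Prime]

theorem norm_le_inv_of_toZMod_eq_zero {z : ℤ_[p]} (hz : toZMod z = 0) : ‖z‖ ≤ (p : ℝ)⁻¹ := by
  have hlt : ‖z‖ < 1 := by
    rw [← mem_nonunits, ← IsLocalRing.mem_maximalIdeal, ← ker_toZMod]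
    exact hz
  simpa using (norm_le_pow_iff_norm_lt_pow_add_one z (-1)).2 (by simpa using hlt)

theorem norm_natCast_add_one_eq_one {k : ℕ} (hk : k + 1 < p) : ‖(k : ℤ_[p]) + 1‖ = 1 := by
  rw [← Nat.cast_add_one, norm_natCast_eq_one_iff, Nat.Prime.coprime_iff_not_dvd Fact.out]
  exact Nat.not_dvd_of_pos_of_lt k.succ_pos hk

theorem map_inv_natCast_add_one {F : Type*} [DivisionRing F] (f : ℤ_[p] →+* F) {k : ℕ}
    (hk : k + 1 < p) : f ((k : ℤ_[p]) + 1).inv = ((k : F) + 1)⁻¹ := by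
  refine eq_inv_of_mul_eq_one_right ?_
  rw [← map_natCast f, ← map_one f, ← map_add, ← map_mul, mul_inv (norm_natCast_add_one_eq_one hk)]

/-- On `(range j).disjSum (range (2 * j))`, `inl k ↦ -1/(k+1)` and `inr k ↦ 1/(k+1)` are the
`uᵢ` of the factors `1 + p uᵢ` of `∏_{k ≤ j} (1 - p/k) · ∏_{k ≤ 2j} (1 + p/k)`. -/
noncomputable def signedRecip (p : ℕ) [Fact p.Prime] : ℕ ⊕ ℕ → ℤ_[p] :=
  Sum.elim (fun k => -((k : ℤ_[p]) + 1).inv) (fun k => ((k : ℤ_[p]) + 1).inv)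

variable {j : ℕ}

section

variable (hj : 2 * j < p)
include hj

theorem map_sum_signedRecip {F : Type*} [DivisionRing F] (f : ℤ_[p] →+* F) :
    f (∑ i ∈ (range j).disjSum (range (2 * j)), signedRecip p i)
      = -∑ k ∈ range j, ((k : F) + 1)⁻¹ + ∑ k ∈ range (2 * j), ((k : F) + 1)⁻¹ := by
  rw [map_sum, sum_disjSum, ← sum_neg_distrib]
  congr 1 <;> refine sum_congr rfl fun k hk => ?_ <;> have := mem_range.1 hk <;>
    simp [signedRecip, map_inv_natCast_add_one f (by omega : k + 1 < p)]

theorem map_sum_signedRecip_sq {F : Type*} [DivisionRing F] (f : ℤ_[p] →+* F) :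
    f (∑ i ∈ (range j).disjSum (range (2 * j)), signedRecip p i ^ 2)
      = ∑ k ∈ range j, ((k : F) + 1)⁻¹ ^ 2 + ∑ k ∈ range (2 * j), ((k : F) + 1)⁻¹ ^ 2 := by
  rw [map_sum, sum_disjSum]
  congr 1 <;> refine sum_congr rfl fun k hk => ?_ <;> have := mem_range.1 hk <;>
    simp [signedRecip, map_inv_natCast_add_one f (by omega : k + 1 < p)]

theorem map_prod_one_add_mul_signedRecip {F : Type*} [Field F] [CharZero F] (f : ℤ_[p] →+* F) :
    f (∏ i ∈ (range j).disjSum (range (2 * j)), (1 + p * signedRecip p i))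
      = (-1) ^ j * ((p - 1).choose j : F) * (p + 2 * j).choose (2 * j) := by
  rw [map_prod, prod_disjSum, Nat.cast_sub_one_choose_eq_prod (by omega),
    Nat.cast_add_choose_eq_prod, ← mul_assoc, ← mul_pow, neg_one_mul, neg_neg, one_pow, one_mul]
  congr 1 <;> refine prod_congr rfl fun k hk => ?_ <;> have := mem_range.1 hk <;>
    simp [signedRecip, map_inv_natCast_add_one f (by omega : k + 1 < p), div_eq_mul_inv,
      sub_eq_add_neg]

end

theorem norm_sq_sum_signedRecip_sub_sum_sq_le (hpj : p = 3 * j + 1) :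
    ‖(∑ i ∈ (range j).disjSum (range (2 * j)), signedRecip p i) ^ 2
      - ∑ i ∈ (range j).disjSum (range (2 * j)), signedRecip p i ^ 2‖ ≤ (p : ℝ)⁻¹ := by
  have hj : 2 * j < p := by omega
  have hS := norm_le_inv_of_toZMod_eq_zero (z := ∑ i ∈ (range j).disjSum (range (2 * j)),
    signedRecip p i) <| by
      rw [map_sum_signedRecip hj toZMod, sum_range_two_mul_inv_eq hpj, neg_add_cancel]
  have hQ := norm_le_inv_of_toZMod_eq_zero (z := ∑ i ∈ (range j).disjSum (range (2 * j)),
    signedRecip p i ^ 2) <| by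
      rw [map_sum_signedRecip_sq hj toZMod, sum_range_inv_sq_add_sum_range_two_mul_inv_sq hpj]
  have hp1 : (p : ℝ)⁻¹ ≤ 1 := inv_le_one_of_one_le₀ (mod_cast (Fact.out : p.Prime).one_lt.le)
  rw [sub_eq_add_neg]
  refine (IsUltrametricDist.norm_add_le_max _ _).trans (max_le ?_ ((norm_neg _).trans_le hQ))
  rw [norm_pow]
  exact (pow_le_pow_left₀ (norm_nonneg _) hS 2).trans
    (pow_le_of_le_one (by positivity) hp1 two_ne_zero)

theorem norm_prod_signedRecip_sub_le (hj : 2 * j < p) :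
    ‖∏ i ∈ (range j).disjSum (range (2 * j)), (1 + p * signedRecip p i) - 1
      - p * ∑ i ∈ (range j).disjSum (range (2 * j)), signedRecip p i‖
      ≤ (p : ℝ)⁻¹ ^ 2 * ‖((3 * j + 1 : ℕ) : ℚ_[p])‖ := by
  have hx : ‖(p : ℤ_[p])‖ ≤ 1 := norm_le_one _
  have hu : ∀ i ∈ (range j).disjSum (range (2 * j)), ‖signedRecip p i‖ ≤ 1 :=
    fun _ _ => norm_le_one _
  by_cases hdvd : p ∣ 3 * j + 1
  swap
  · rw [Padic.norm_natCast_eq_one_iff.2 ((Nat.Prime.coprime_iff_not_dvd Fact.out).2 hdvd), mul_one,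
      ← norm_p]
    exact norm_prod_one_add_sub_linear_le hx hu
  -- `3j + 1 < 2p`, so the prefactor `p / (3j + 1)` is a unit and the second-order term must vanish
  have hpj : p = 3 * j + 1 := by
    obtain ⟨c, hc⟩ := hdvd
    rcases c with _ | _ | c <;> [omega; omega; nlinarith]
  set P := ∏ i ∈ (range j).disjSum (range (2 * j)), (1 + p * signedRecip p i)
  set S := ∑ i ∈ (range j).disjSum (range (2 * j)), signedRecip p i
  set Q := ∑ i ∈ (range j).disjSum (range (2 * j)), signedRecip p i ^ 2
  have hsecond : ‖(p : ℤ_[p]) ^ 2 * (S ^ 2 - Q)‖ ≤ (p : ℝ)⁻¹ ^ 3 := by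
    rw [norm_mul, norm_pow, norm_p, pow_succ _ 2]
    gcongr
    exact norm_sq_sum_signedRecip_sub_sum_sq_le hpj
  have h2 : ‖(2 : ℤ_[p])‖ = 1 := by
    rw [← Nat.cast_ofNat, norm_natCast_eq_one_iff, Nat.Prime.coprime_iff_not_dvd Fact.out]
    exact Nat.not_dvd_of_pos_of_lt two_pos
      (by have := three_lt_of_eq_three_mul_add_one hpj; omega)
  have hquad := norm_prod_one_add_sub_quadratic_le hx hu
  rw [norm_p] at hquad
  calc ‖P - 1 - p * S‖
      = ‖(2 * (P - 1 - p * S) - p ^ 2 * (S ^ 2 - Q)) + p ^ 2 * (S ^ 2 - Q)‖ := by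
        rw [sub_add_cancel, norm_mul, h2, one_mul]
    _ ≤ (p : ℝ)⁻¹ ^ 3 := (IsUltrametricDist.norm_add_le_max _ _).trans (max_le hquad hsecond)
    _ = (p : ℝ)⁻¹ ^ 2 * ‖((3 * j + 1 : ℕ) : ℚ_[p])‖ := by rw [← hpj, Padic.norm_p, pow_succ]

theorem cast_choose_mul_choose_sub_eq (hj : 2 * j < p) :
    ((((3 * j).choose j : ℚ) * ((p + 2 * j).choose (3 * j + 1) : ℚ)
        - (p : ℚ) * (-1) ^ j / (3 * j + 1) * (1 + p * H (2 * j) - p * H j) : ℚ) : ℚ_[p])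
      = (p : ℚ_[p]) * (-1) ^ j / ((3 * j + 1 : ℕ) : ℚ_[p]) * Coe.ringHom
        (∏ i ∈ (range j).disjSum (range (2 * j)), (1 + (p : ℤ_[p]) * signedRecip p i) - 1
          - (p : ℤ_[p]) * ∑ i ∈ (range j).disjSum (range (2 * j)), signedRecip p i) := by
  have hid := congrArg (Nat.cast : ℕ → ℚ_[p])
    (three_mul_add_one_mul_choose_mul_choose (n := p) (j := j) (by omega))
  have hX : ((3 * j + 1 : ℕ) : ℚ_[p]) ≠ 0 := Nat.cast_ne_zero.2 (Nat.succ_ne_zero _)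
  have hsq : ((-1 : ℚ_[p]) ^ j) ^ 2 = 1 := by rw [← pow_mul, mul_comm, pow_mul]; simp
  rw [map_sub, map_sub, map_mul, map_one, map_natCast,
    map_prod_one_add_mul_signedRecip hj, map_sum_signedRecip hj]
  push_cast at hid hX ⊢
  simp only [H]
  push_cast
  field_simp
  linear_combination hid
    - (p * ((p + 2 * j).choose (2 * j) : ℚ_[p]) * ((p - 1).choose j : ℚ_[p])) * hsq

end PadicInt

theorem pCong_of_norm_le {p m : ℕ} [Fact p.Prime] {a b : ℚ}
    (h : ‖((a - b : ℚ) : ℚ_[p])‖ ≤ (p : ℝ)⁻¹ ^ m) : pCong p m a b := by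
  have hp : (p : ℚ) ≠ 0 := Nat.cast_ne_zero.2 (Fact.out : p.Prime).ne_zero
  refine ⟨(a - b) / p ^ m, (mul_div_cancel₀ _ (pow_ne_zero m hp)).symm, ?_⟩
  have hnorm : ‖(((a - b) / p ^ m : ℚ) : ℚ_[p])‖ ≤ 1 := by
    rw [Rat.cast_div, norm_div, Rat.cast_pow, norm_pow, Rat.cast_natCast, Padic.norm_p,
      div_le_one (pow_pos (inv_pos.2 (Nat.cast_pos.2 (Fact.out : p.Prime).pos)) m)]
    exact h
  have := PadicInt.isUnit_iff.1 (PadicInt.isUnit_den _ hnorm)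
  rwa [PadicInt.norm_natCast_eq_one_iff, Nat.Prime.coprime_iff_not_dvd Fact.out] at this

theorem stmt_1_general (p : ℕ) (hp : p.Prime) (j : ℕ) (hj : j ≤ (p - 1) / 2) :
    pCong p 3 (((3 * j).choose j : ℚ) * ((p + 2 * j).choose (3 * j + 1) : ℚ))
      ((p : ℚ) * (-1) ^ j / (3 * j + 1) * (1 + p * H (2 * j) - p * H j)) := by
  have := Fact.mk hp
  have hjp : 2 * j < p := by have := hp.pos; omega
  have hX : ‖((3 * j + 1 : ℕ) : ℚ_[p])‖ ≠ 0 :=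
    norm_ne_zero_iff.2 (Nat.cast_ne_zero.2 (Nat.succ_ne_zero _))
  apply pCong_of_norm_le
  rw [PadicInt.cast_choose_mul_choose_sub_eq hjp, norm_mul, norm_div, norm_mul, norm_pow, norm_neg,
    norm_one, one_pow, mul_one, Padic.norm_p]
  calc (p : ℝ)⁻¹ / ‖((3 * j + 1 : ℕ) : ℚ_[p])‖ * ‖PadicInt.Coe.ringHom _‖
      ≤ (p : ℝ)⁻¹ / ‖((3 * j + 1 : ℕ) : ℚ_[p])‖ * ((p : ℝ)⁻¹ ^ 2 * ‖((3 * j + 1 : ℕ) : ℚ_[p])‖) := by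
        gcongr
        exact PadicInt.norm_prod_signedRecip_sub_le hjp
    _ = (p : ℝ)⁻¹ ^ 3 := by field_simp

theorem stmt_1 (p : ℕ) (hp : p.Prime) (hp2 : 2 < p) (j : ℕ) (hj : j ≤ (p - 1) / 2) :
    pCong p 3 (((3 * j).choose j : ℚ) * ((p + 2 * j).choose (3 * j + 1) : ℚ))
      ((p : ℚ) * (-1) ^ j / (3 * j + 1) * (1 + p * H (2 * j) - p * H j)) :=
  stmt_1_general p hp j hj
end

section
/- For any prime p > 2 and integer j with (p+1)/2 ≤ j ≤ p-1, one has C(3j, j) · C(p+2j, 3j+1) ≡ 2p·(-1)^j/(3j+1) (mod p^2). -/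
open Finset

namespace Nat

theorem add_one_mul_choose_mul_choose (n j : ℕ) :
    (3 * j + 1) * (3 * j).choose j * (n + 2 * j).choose (3 * j + 1)
      = n * (n + 2 * j).choose (2 * j) * (n - 1).choose j := by
  have h₁ : (3 * j + 1) * (3 * j).choose j = (3 * j + 1).choose (2 * j) * (j + 1) := by
    rw [add_one_mul_choose_eq, choose_symm_of_eq_add (by omega : 3 * j + 1 = (j + 1) + 2 * j)]
  have h₂ : (n + 2 * j).choose (3 * j + 1) * (3 * j + 1).choose (2 * j)
      = (n + 2 * j).choose (2 * j) * n.choose (j + 1) := by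
    rw [choose_mul (by omega), Nat.add_sub_cancel, show 3 * j + 1 - 2 * j = j + 1 by omega]
  have h₃ : n.choose (j + 1) * (j + 1) = n * (n - 1).choose j := by
    rcases n with _ | n
    · simp
    · rw [← add_one_mul_choose_eq, Nat.add_sub_cancel]
  calc (3 * j + 1) * (3 * j).choose j * (n + 2 * j).choose (3 * j + 1)
      = (n + 2 * j).choose (3 * j + 1) * (3 * j + 1).choose (2 * j) * (j + 1) := by
        rw [h₁]; ring
    _ = (n + 2 * j).choose (2 * j) * (n.choose (j + 1) * (j + 1)) := by rw [h₂]; ring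
    _ = n * (n + 2 * j).choose (2 * j) * (n - 1).choose j := by rw [h₃]; ring

theorem cast_add_choose_eq_prod_s2 (n k : ℕ) :
    ((n + k).choose k : ℚ) = ∏ i ∈ Ioc 0 k, (1 + (n : ℚ) / i) := by
  induction k with
  | zero => simp
  | succ k ih =>
    have h : ((n + k + 1 : ℕ) : ℚ) * (n + k).choose k
        = ((n + k + 1).choose (k + 1) : ℚ) * (k + 1) := by
      exact_mod_cast add_one_mul_choose_eq (n + k) k
    rw [prod_Ioc_succ_top k.zero_le, ← ih, ← add_assoc]
    push_cast at h ⊢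
    field_simp
    linear_combination -h

theorem cast_choose_pred_eq_prod (n k : ℕ) (hk : k < n) :
    ((n - 1).choose k : ℚ) = (-1) ^ k * ∏ i ∈ Ioc 0 k, (1 - (n : ℚ) / i) := by
  induction k with
  | zero => simp
  | succ k ih =>
    have h : ((n - 1).choose (k + 1) : ℚ) * (k + 1)
        = (n - 1).choose k * ((n - 1 - k : ℕ) : ℚ) := by
      exact_mod_cast choose_succ_right_eq (n - 1) k
    rw [ih (by omega), Nat.cast_sub (by omega), Nat.cast_sub (by omega)] at h
    rw [prod_Ioc_succ_top k.zero_le, pow_succ]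
    push_cast at h ⊢
    field_simp
    linear_combination h

end Nat

theorem Finset.prod_Ioc_reflect {M : Type*} [CommMonoid M] (f : ℕ → M) {a b n : ℕ}
    (h : b < n) :
    ∏ i ∈ Ioc a b, f i = ∏ i ∈ Ioc (n - 1 - b) (n - 1 - a), f (n - i) :=
  prod_nbij' (fun i => n - i) (fun i => n - i)
    (fun i hi => by simp only [mem_Ioc] at hi ⊢; omega)
    (fun i hi => by simp only [mem_Ioc] at hi ⊢; omega)
    (fun i hi => by simp only [mem_Ioc] at hi; omega)
    (fun i hi => by simp only [mem_Ioc] at hi; omega)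
    (fun i hi => by simp only [mem_Ioc] at hi; rw [Nat.sub_sub_self (by omega)])

namespace padicNorm

variable {p : ℕ} [Fact p.Prime]

theorem le_one_iff_not_dvd_den (x : ℚ) : padicNorm p x ≤ 1 ↔ ¬ p ∣ x.den := by
  rw [← Rat.cast_le (K := ℝ), Rat.cast_one, ← Padic.eq_padicNorm,
    Padic.norm_rat_le_one_iff_padicValuation_le_one, Rat.padicValuation_le_one_iff]

theorem p_div_natCast_of_not_dvd {i : ℕ} (hi : ¬ p ∣ i) :
    padicNorm p ((p : ℚ) / i) = (p : ℚ)⁻¹ := by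
  rw [padicNorm.div, padicNorm_p_of_prime, (nat_eq_one_iff i).2 hi, div_one]

theorem intCast_mul_sub_le (c : ℤ) (x : ℚ) :
    padicNorm p (c * x - c) ≤ padicNorm p (x - 1) := by
  rw [show (c : ℚ) * x - c = c * (x - 1) by ring, padicNorm.mul]
  exact mul_le_of_le_one_left (padicNorm.nonneg _) (padicNorm.of_int c)

theorem le_one_of_sub_one_le {x : ℚ} (hx : padicNorm p (x - 1) ≤ 1) : padicNorm p x ≤ 1 := by
  simpa [padicNorm.one] using (padicNorm.nonarchimedean (p := p) (q := x - 1) (r := 1)).trans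
    (max_le hx padicNorm.one.le)

theorem mul_sub_one_le {x y ε : ℚ} (hε : ε ≤ 1) (hx : padicNorm p (x - 1) ≤ ε)
    (hy : padicNorm p (y - 1) ≤ ε) : padicNorm p (x * y - 1) ≤ ε := by
  have hy₁ : padicNorm p y ≤ 1 := le_one_of_sub_one_le (hy.trans hε)
  have hxy : padicNorm p ((x - 1) * y) ≤ ε := by
    rw [padicNorm.mul]
    nlinarith [padicNorm.nonneg (p := p) (x - 1), padicNorm.nonneg (p := p) y]
  calc padicNorm p (x * y - 1) = padicNorm p ((x - 1) * y + (y - 1)) := by ring_nf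
    _ ≤ ε := padicNorm.nonarchimedean.trans (max_le hxy hy)

theorem prod_sub_one_le {ι : Type*} (s : Finset ι) (f : ι → ℚ) {ε : ℚ} (hε₀ : 0 ≤ ε)
    (hε : ε ≤ 1) (hf : ∀ i ∈ s, padicNorm p (f i - 1) ≤ ε) :
    padicNorm p (∏ i ∈ s, f i - 1) ≤ ε := by
  classical
  induction s using Finset.induction_on with
  | empty => simpa using hε₀
  | insert a s ha ih =>
    rw [prod_insert ha]
    exact mul_sub_one_le hε (hf a (mem_insert_self a s))
      (ih fun i hi => hf i (mem_insert_of_mem hi))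

end padicNorm

theorem pCong_of_padicNorm_sub_le {p : ℕ} [Fact p.Prime] {m : ℕ} {a b : ℚ}
    (h : padicNorm p (a - b) ≤ (p : ℚ)⁻¹ ^ m) : pCong p m a b := by
  have hp : (p : ℚ) ^ m ≠ 0 := pow_ne_zero _ (Nat.cast_ne_zero.2 (Fact.out : p.Prime).ne_zero)
  refine ⟨(a - b) / p ^ m, (mul_div_cancel₀ _ hp).symm,
    (padicNorm.le_one_iff_not_dvd_den _).1 ?_⟩
  rw [padicNorm.div, IsAbsoluteValue.abv_pow (padicNorm p), padicNorm.padicNorm_p_of_prime]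
  exact div_le_one_of_le₀ h (by positivity)

section

variable {p j : ℕ} [Fact p.Prime]

theorem padicNorm_choose_mul_choose_sub_le (hpj : p ≤ 2 * j) (hjp : j < p) :
    padicNorm p ((p + 2 * j).choose (2 * j) * (p - 1).choose j - 2 * (-1) ^ j : ℚ)
      ≤ (p : ℚ)⁻¹ := by
  have hp : (p : ℚ) ≠ 0 := Nat.cast_ne_zero.2 (Fact.out : p.Prime).ne_zero
  have hinv : (p : ℚ)⁻¹ ≤ 1 := Nat.cast_inv_le_one p
  have hmem : p ∈ Ioc 0 (2 * j) := mem_Ioc.2 ⟨(Fact.out : p.Prime).pos, hpj⟩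
  have hplus : ∀ i ∈ (Ioc 0 (2 * j)).erase p,
      padicNorm p (1 + (p : ℚ) / i - 1) ≤ (p : ℚ)⁻¹ := by
    intro i hi
    obtain ⟨hip, hi⟩ := mem_erase.1 hi
    obtain ⟨hi₀, hij⟩ := mem_Ioc.1 hi
    have hnd : ¬ p ∣ i := fun hd => hip (Nat.eq_of_dvd_of_lt_two_mul hi₀.ne' hd (by omega))
    rw [add_sub_cancel_left, padicNorm.p_div_natCast_of_not_dvd hnd]
  have hminus : ∀ i ∈ Ioc 0 j, padicNorm p (1 - (p : ℚ) / i - 1) ≤ (p : ℚ)⁻¹ := by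
    intro i hi
    obtain ⟨hi₀, hij⟩ := mem_Ioc.1 hi
    rw [sub_sub_cancel_left, padicNorm.neg,
      padicNorm.p_div_natCast_of_not_dvd (Nat.not_dvd_of_pos_of_lt hi₀ (by omega))]
  have hprod := padicNorm.mul_sub_one_le hinv
    (padicNorm.prod_sub_one_le _ _ (by positivity) hinv hplus)
    (padicNorm.prod_sub_one_le _ _ (by positivity) hinv hminus)
  rw [Nat.cast_add_choose_eq_prod_s2, Nat.cast_choose_pred_eq_prod _ _ hjp,
    ← mul_prod_erase _ _ hmem]
  calc _ = padicNorm p ((2 * (-1) ^ j : ℤ) *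
          ((∏ i ∈ (Ioc 0 (2 * j)).erase p, (1 + (p : ℚ) / i)) * ∏ i ∈ Ioc 0 j, (1 - (p : ℚ) / i))
          - (2 * (-1) ^ j : ℤ)) := by
        rw [div_self hp]; push_cast; congr 1; ring
    _ ≤ _ := (padicNorm.intCast_mul_sub_le _ _).trans hprod

theorem padicNorm_choose_mul_choose_sub_le_sq (hj : 3 * j + 1 = 2 * p) :
    padicNorm p ((p + 2 * j).choose (2 * j) * (p - 1).choose j - 2 * (-1) ^ j : ℚ)
      ≤ (p : ℚ)⁻¹ ^ 2 := by
  have hp₁ : 1 ≤ p := (Fact.out : p.Prime).one_le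
  have hp : (p : ℚ) ≠ 0 := Nat.cast_ne_zero.2 (Fact.out : p.Prime).ne_zero
  have hinv : (p : ℚ)⁻¹ ^ 2 ≤ 1 := pow_le_one₀ (by positivity) (Nat.cast_inv_le_one p)
  set f : ℕ → ℚ := fun i => 1 + p / i with hf
  have hsplit : ∏ i ∈ Ioc 0 (2 * j), f i
      = 2 * ((∏ i ∈ Ioc 0 j, f i) * ∏ i ∈ Ioc j (p - 1), f i * f (2 * p - i)) := by
    rw [← prod_Ioc_consecutive f (Nat.zero_le p) (by omega),
      ← Nat.sub_add_cancel hp₁, prod_Ioc_succ_top (Nat.zero_le _), Nat.sub_add_cancel hp₁,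
      prod_Ioc_reflect f (a := p) (b := 2 * j) (n := 2 * p) (by omega),
      show 2 * p - 1 - 2 * j = j by omega, show 2 * p - 1 - p = p - 1 by omega,
      ← prod_Ioc_consecutive f (Nat.zero_le j) (by omega), prod_mul_distrib, hf]
    simp only [div_self hp]
    ring
  have hsquare : ∀ i ∈ Ioc 0 j,
      padicNorm p (f i * (1 - (p : ℚ) / i) - 1) ≤ (p : ℚ)⁻¹ ^ 2 := by
    intro i hi
    obtain ⟨hi₀, hij⟩ := mem_Ioc.1 hi
    rw [show f i * (1 - (p : ℚ) / i) - 1 = -((p : ℚ) / i) ^ 2 by ring, padicNorm.neg,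
      IsAbsoluteValue.abv_pow (padicNorm p),
      padicNorm.p_div_natCast_of_not_dvd (Nat.not_dvd_of_pos_of_lt hi₀ (by omega))]
  have hpair : ∀ i ∈ Ioc j (p - 1),
      padicNorm p (f i * f (2 * p - i) - 1) ≤ (p : ℚ)⁻¹ ^ 2 := by
    intro i hi
    obtain ⟨hji, hip⟩ := mem_Ioc.1 hi
    have hsum : (i : ℚ) + (2 * p - i : ℕ) = 2 * p := by
      exact_mod_cast (by omega : i + (2 * p - i) = 2 * p)
    have hi₀ : (i : ℚ) ≠ 0 := Nat.cast_ne_zero.2 (by omega)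
    have hk₀ : ((2 * p - i : ℕ) : ℚ) ≠ 0 := Nat.cast_ne_zero.2 (by omega)
    have hid : f i * f (2 * p - i) - 1 = 3 * ((p : ℚ) / i * (p / (2 * p - i : ℕ))) := by
      simp only [hf]
      field_simp
      linear_combination (p : ℚ) * hsum
    rw [hid, padicNorm.mul, padicNorm.mul,
      padicNorm.p_div_natCast_of_not_dvd (Nat.not_dvd_of_pos_of_lt (by omega) (by omega)),
      padicNorm.p_div_natCast_of_not_dvd
        (Nat.not_dvd_of_lt_of_lt_mul_succ (k := 1) (by omega) (by omega)), ← sq]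
    exact mul_le_of_le_one_left (by positivity) (by exact_mod_cast padicNorm.of_nat (p := p) 3)
  have hprod := padicNorm.mul_sub_one_le hinv
    (padicNorm.prod_sub_one_le _ _ (by positivity) hinv hsquare)
    (padicNorm.prod_sub_one_le _ _ (by positivity) hinv hpair)
  rw [Nat.cast_add_choose_eq_prod_s2, Nat.cast_choose_pred_eq_prod _ _ (by omega)]
  calc _ = padicNorm p ((2 * (-1) ^ j : ℤ) * ((∏ i ∈ Ioc 0 j, f i * (1 - (p : ℚ) / i)) *
          ∏ i ∈ Ioc j (p - 1), f i * f (2 * p - i)) - (2 * (-1) ^ j : ℤ)) := by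
        rw [hsplit]; simp only [prod_mul_distrib]; push_cast; congr 1; ring
    _ ≤ _ := (padicNorm.intCast_mul_sub_le _ _).trans hprod

theorem padicNorm_choose_mul_choose_sub_le_mul (hp2 : 2 < p) (hj1 : (p + 1) / 2 ≤ j)
    (hj2 : j ≤ p - 1) :
    padicNorm p ((p + 2 * j).choose (2 * j) * (p - 1).choose j - 2 * (-1) ^ j : ℚ)
      ≤ (p : ℚ)⁻¹ * padicNorm p (3 * j + 1 : ℕ) := by
  by_cases hdvd : p ∣ 3 * j + 1
  · obtain ⟨k, hk⟩ := hdvd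
    have hk₁ : 1 < k := Nat.lt_of_mul_lt_mul_left (a := p) (by rw [mul_one, ← hk]; omega)
    have hk₃ : k < 3 := Nat.lt_of_mul_lt_mul_left (a := p) (by rw [← hk]; omega)
    have h2p : 3 * j + 1 = 2 * p := by rw [hk, mul_comm, show k = 2 by omega]
    rw [h2p, Nat.cast_mul, padicNorm.mul, padicNorm.padicNorm_p_of_prime,
      (padicNorm.nat_eq_one_iff 2).2 (Nat.not_dvd_of_pos_of_lt two_pos hp2), one_mul, ← sq]
    exact padicNorm_choose_mul_choose_sub_le_sq h2p
  · rw [(padicNorm.nat_eq_one_iff _).2 hdvd, mul_one]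
    exact padicNorm_choose_mul_choose_sub_le (by omega) (by omega)

end

theorem stmt_2 (p : ℕ) (hp : p.Prime) (hp2 : 2 < p) (j : ℕ)
    (hj1 : (p + 1) / 2 ≤ j) (hj2 : j ≤ p - 1) :
    pCong p 2 (((3 * j).choose j : ℚ) * ((p + 2 * j).choose (3 * j + 1) : ℚ))
      (2 * (p : ℚ) * (-1) ^ j / (3 * j + 1)) := by
  have : Fact p.Prime := ⟨hp⟩
  have hq : ((3 * j + 1 : ℕ) : ℚ) ≠ 0 := Nat.cast_ne_zero.2 (Nat.succ_ne_zero _)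
  have hid : ((3 * j).choose j : ℚ) * ((p + 2 * j).choose (3 * j + 1) : ℚ)
      - 2 * (p : ℚ) * (-1) ^ j / (3 * j + 1)
      = p * ((p + 2 * j).choose (2 * j) * (p - 1).choose j - 2 * (-1) ^ j : ℚ)
        / (3 * j + 1 : ℕ) := by
    have h := congrArg (Nat.cast : ℕ → ℚ) (Nat.add_one_mul_choose_mul_choose p j)
    push_cast at h hq ⊢
    field_simp
    linear_combination h
  apply pCong_of_padicNorm_sub_le
  rw [hid, padicNorm.div, padicNorm.mul, padicNorm.padicNorm_p_of_prime,
    div_le_iff₀ (lt_of_le_of_ne (padicNorm.nonneg _) (padicNorm.nonzero hq).symm), sq, mul_assoc]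
  exact mul_le_mul_of_nonneg_left (padicNorm_choose_mul_choose_sub_le_mul hp2 hj1 hj2)
    (by positivity)
end

section
/- Let p > 3 be a prime with p ≡ 1 (mod 3). Then for any p-adic integer t, C((2p-2)/3 + pt, (p-1)/2) ≡ C((2p-2)/3, (p-1)/2) · (1 + p·t·(H_{(2p-2)/3} - H_{(p-1)/6})) (mod p^2). -/
open Finset

/-- Generalized binomial coefficient `C(x, k)` for a `p`-adic number `x`. -/
noncomputable def padicChoose {p : ℕ} [Fact p.Prime] (x : ℚ_[p]) (k : ℕ) : ℚ_[p] :=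
  (∏ i ∈ Finset.range k, (x - i)) / (k.factorial : ℚ_[p])

lemma sum_norm_le_one' {p : ℕ} [Fact p.Prime] (k : ℕ) (f : ℕ → ℚ_[p])
    (h : ∀ i < k, ‖f i‖ ≤ 1) : ‖∑ i ∈ range k, f i‖ ≤ 1 := by
  induction k with
  | zero => simp
  | succ n ih =>
    rw [Finset.sum_range_succ]
    refine le_trans (Padic.nonarchimedean _ _) (max_le ?_ ?_)
    · exact ih fun i hi => h i (by omega)
    · exact h n (by omega)

lemma key_est {p : ℕ} [hp : Fact p.Prime] (a : ℕ → ℚ_[p]) (ε : ℚ_[p])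
    (hε : ‖ε‖ ≤ ((p : ℝ))⁻¹) (k : ℕ) (ha : ∀ i < k, ‖a i‖ = 1) :
    ‖∏ i ∈ range k, (a i + ε) -
      (∏ i ∈ range k, a i) * (1 + ε * ∑ j ∈ range k, (a j)⁻¹)‖ ≤ ((p : ℝ)⁻¹) ^ 2 := by
  have hp1 : (1 : ℝ) < p := by exact_mod_cast hp.out.one_lt
  have hpinv : (p : ℝ)⁻¹ ≤ 1 := by rw [inv_le_one_iff₀]; right; exact hp1.le
  have hpinvpos : (0 : ℝ) < (p : ℝ)⁻¹ := by positivity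
  induction k with
  | zero => simp [sq_nonneg, le_of_lt, mul_pos hpinvpos hpinvpos]
  | succ n ih =>
    have han : ‖a n‖ = 1 := ha n (by omega)
    have hane : a n ≠ 0 := by intro h; rw [h] at han; simp at han
    set Q := ∏ i ∈ range n, (a i + ε) with hQ
    set A := ∏ i ∈ range n, a i with hA
    set S := ∑ j ∈ range n, (a j)⁻¹ with hS
    have hAn : ‖A‖ ≤ 1 := by
      rw [hA, norm_prod]
      exact Finset.prod_le_one (fun i _ => norm_nonneg _)
        (fun i hi => le_of_eq (ha i (by simp at hi; omega)))
    have hSn : ‖S‖ ≤ 1 := by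
      refine sum_norm_le_one' n _ fun i hi => ?_
      rw [norm_inv, ha i (by omega)]; norm_num
    have key : ∏ i ∈ range (n+1), (a i + ε) -
        (∏ i ∈ range (n+1), a i) * (1 + ε * ∑ j ∈ range (n+1), (a j)⁻¹)
        = (Q - A * (1 + ε * S)) * (a n + ε) + ε^2 * A * S := by
      rw [prod_range_succ, prod_range_succ, sum_range_succ]
      linear_combination (-(ε * A)) * (mul_inv_cancel₀ hane)
    rw [key]
    refine le_trans (Padic.nonarchimedean _ _) (max_le ?_ ?_)
    · calc ‖(Q - A * (1 + ε * S)) * (a n + ε)‖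
          = ‖Q - A * (1 + ε * S)‖ * ‖a n + ε‖ := norm_mul _ _
        _ ≤ ((p:ℝ)⁻¹)^2 * 1 := by
            refine mul_le_mul (ih fun i hi => ha i (by omega)) ?_ (norm_nonneg _) (by positivity)
            refine le_trans (Padic.nonarchimedean _ _) (max_le (le_of_eq han) (hε.trans hpinv))
        _ = ((p:ℝ)⁻¹)^2 := mul_one _
    · calc ‖ε^2 * A * S‖ = ‖ε‖^2 * ‖A‖ * ‖S‖ := by rw [norm_mul, norm_mul, norm_pow]
        _ ≤ ((p:ℝ)⁻¹)^2 * 1 * 1 := by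
            refine mul_le_mul (mul_le_mul (pow_le_pow_left₀ (norm_nonneg _) hε 2) hAn
              (norm_nonneg _) (by positivity)) hSn (norm_nonneg _) (by positivity)
        _ = ((p:ℝ)⁻¹)^2 := by ring

lemma norm_natCast_eq_one {p : ℕ} [Fact p.Prime] {n : ℕ} (hn : ¬ p ∣ n) :
    ‖(n : ℚ_[p])‖ = 1 := by
  have hle : ‖((n : ℤ) : ℚ_[p])‖ ≤ 1 := Padic.norm_int_le_one _
  have hlt : ¬ ‖((n : ℤ) : ℚ_[p])‖ < 1 := by
    rw [Padic.norm_intCast_lt_one_iff]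
    intro hd
    exact hn (Int.ofNat_dvd.mp hd)
  push_cast at hle hlt
  exact le_antisymm hle (not_lt.mp hlt)

lemma H_diff (s k : ℕ) : H (s + k) - H s = ∑ j ∈ Finset.range k, ((s + k - j : ℕ) : ℚ)⁻¹ := by
  have h1 : H (s + k) - H s = ∑ j ∈ Finset.range k, ((s + j + 1 : ℕ) : ℚ)⁻¹ := by
    unfold H
    rw [Finset.sum_range_add (fun i => (1 : ℚ) / (i + 1)) s k, add_sub_cancel_left]
    apply Finset.sum_congr rfl
    intro j _
    rw [one_div]
    push_cast
    ring_nf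
  rw [h1, ← Finset.sum_range_reflect (fun j => ((s + j + 1 : ℕ) : ℚ)⁻¹) k]
  apply Finset.sum_congr rfl
  intro j hj
  simp only [Finset.mem_range] at hj
  congr 2
  omega

theorem stmt_3 (p : ℕ) [Fact p.Prime] (hp3 : 3 < p) (hp1 : p % 3 = 1) (t : ℤ_[p]) :
    ‖padicChoose ((((2 * p - 2) / 3 : ℕ) : ℚ_[p]) + (p : ℚ_[p]) * (t : ℚ_[p])) ((p - 1) / 2)
        - ((((2 * p - 2) / 3).choose ((p - 1) / 2) : ℕ) : ℚ_[p]) *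
          (1 + (p : ℚ_[p]) * (t : ℚ_[p]) *
            (((H ((2 * p - 2) / 3) : ℚ) : ℚ_[p]) - ((H ((p - 1) / 6) : ℚ) : ℚ_[p])))‖
      ≤ (p : ℝ) ^ (-2 : ℤ) := by
  have hp : p.Prime := Fact.out
  have hodd : p % 2 = 1 := Nat.odd_iff.mp (hp.odd_of_ne_two (by omega))
  obtain ⟨s, hs, hs1⟩ : ∃ s, p = 6 * s + 1 ∧ 1 ≤ s := ⟨p / 6, by omega, by omega⟩
  have hm : (2 * p - 2) / 3 = 4 * s := by omega
  have hk : (p - 1) / 2 = 3 * s := by omega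
  have hs6 : (p - 1) / 6 = s := by omega
  rw [hm, hk, hs6]
  set m : ℕ := 4 * s with hm'
  set k : ℕ := 3 * s with hk'
  set ε : ℚ_[p] := (p : ℚ_[p]) * (t : ℚ_[p]) with hε'
  set a : ℕ → ℚ_[p] := fun i => ((m : ℚ_[p]) - (i : ℚ_[p])) with ha'
  have hkm : k ≤ m := by omega
  have hacast : ∀ i < k, a i = ((m - i : ℕ) : ℚ_[p]) := by
    intro i hi
    rw [ha', Nat.cast_sub (by omega)]
  have hanorm : ∀ i < k, ‖a i‖ = 1 := by
    intro i hi
    rw [hacast i hi]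
    apply norm_natCast_eq_one
    intro hdvd
    have := Nat.le_of_dvd (by omega) hdvd
    omega
  have hεnorm : ‖ε‖ ≤ (p : ℝ)⁻¹ := by
    rw [hε', norm_mul, Padic.norm_p]
    calc (p : ℝ)⁻¹ * ‖(t : ℚ_[p])‖ ≤ (p : ℝ)⁻¹ * 1 := by
          refine mul_le_mul_of_nonneg_left ?_ (by positivity)
          rw [PadicInt.padic_norm_e_of_padicInt]
          exact t.norm_le_one
      _ = (p : ℝ)⁻¹ := mul_one _
  have hfacdvd : ¬ p ∣ k.factorial := by
    rw [Nat.Prime.dvd_factorial hp]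
    omega
  have hfacnorm : ‖(k.factorial : ℚ_[p])‖ = 1 := norm_natCast_eq_one hfacdvd
  have hfacne : ((k.factorial : ℚ_[p])) ≠ 0 := by
    intro h
    rw [h] at hfacnorm
    simp at hfacnorm
  have hprod : ∏ i ∈ range k, a i = ((k.factorial * m.choose k : ℕ) : ℚ_[p]) := by
    have h1 : ∏ i ∈ range k, a i = ((∏ i ∈ range k, (m - i) : ℕ) : ℚ_[p]) := by
      rw [Nat.cast_prod]
      exact Finset.prod_congr rfl fun i hi => hacast i (Finset.mem_range.mp hi)
    rw [h1, ← Nat.descFactorial_eq_prod_range, Nat.descFactorial_eq_factorial_mul_choose]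
  have hsum : ∑ j ∈ range k, (a j)⁻¹ = (((H m - H s : ℚ)) : ℚ_[p]) := by
    have hmsk : m = s + k := by omega
    rw [hmsk, H_diff s k]
    push_cast
    apply Finset.sum_congr rfl
    intro j hj
    simp only [Finset.mem_range] at hj
    rw [hacast j hj]
    congr 1
    rw [hmsk]
  have hx : padicChoose ((m : ℚ_[p]) + ε) k
      = (∏ i ∈ range k, (a i + ε)) / (k.factorial : ℚ_[p]) := by
    unfold padicChoose
    congr 1
    exact Finset.prod_congr rfl fun i _ => by rw [ha']; ring
  have heq : padicChoose ((m : ℚ_[p]) + ε) k - ((m.choose k : ℕ) : ℚ_[p]) *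
        (1 + ε * (((H m : ℚ) : ℚ_[p]) - ((H s : ℚ) : ℚ_[p])))
      = (∏ i ∈ range k, (a i + ε) -
          (∏ i ∈ range k, a i) * (1 + ε * ∑ j ∈ range k, (a j)⁻¹)) / (k.factorial : ℚ_[p]) := by
    rw [hx, hsum, hprod]
    push_cast
    field_simp
  rw [heq, norm_div, hfacnorm, div_one]
  calc ‖∏ i ∈ range k, (a i + ε) -
      (∏ i ∈ range k, a i) * (1 + ε * ∑ j ∈ range k, (a j)⁻¹)‖
      ≤ ((p : ℝ)⁻¹) ^ 2 := key_est a ε hεnorm k hanorm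
    _ = (p : ℝ) ^ (-2 : ℤ) := by
        rw [inv_pow, ← zpow_natCast, ← zpow_neg]
        norm_num
end

section
/- For any prime p > 5, H_{⌊p/6⌋} ≡ -2·q_p(2) - (3/2)·q_p(3) (mod p), where q_p(a) = (a^{p-1} - 1)/p is the Fermat quotient. -/
/-- The Fermat quotient `q_p(a) = (a^(p-1) - 1)/p`. -/
def fermatQuot (p : ℕ) (a : ℚ) : ℚ := (a ^ (p - 1) - 1) / p

/-! Lerch's formula: writing `a j = r_j + p ⌊a j / p⌋` for `1 ≤ j ≤ p - 1`, the residues `r_j`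
permute `1, …, p - 1`, so expanding `a^(p-1) (p-1)! = ∏ (r_j + p ⌊a j / p⌋)` to first order in `p`
gives `a q_p(a) ≡ ∑_j ⌊a j / p⌋ / j (mod p)`. Exchanging the order of summation in
`∑_j ∑_{1 ≤ i ≤ a j / p} 1 / j`, and using `H_{p-1} ≡ 0`, turns the right-hand side into
`-∑_{i=1}^{a-1} H_{⌊i p / a⌋}`. For `a = 2, 3, 6` the symmetry `H_{p-1-n} ≡ H_n` and
`q_p(6) ≡ q_p(2) + q_p(3)` then leave `2 H_{⌊p/6⌋} ≡ -4 q_p(2) - 3 q_p(3)`. -/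

open Finset
open scoped Nat

def harmonicMod (p n : ℕ) : ZMod p := ∑ j ∈ Ioc 0 n, (j : ZMod p)⁻¹

def fermatQuotInt (p : ℕ) (a : ℤ) : ℤ := (a ^ (p - 1) - 1) / p

lemma ZMod.natCast_ne_zero_of_pos_of_lt {p j : ℕ} (h0 : 0 < j) (hj : j < p) :
    (j : ZMod p) ≠ 0 :=
  (ZMod.natCast_eq_zero_iff j p).not.mpr (Nat.not_dvd_of_pos_of_lt h0 hj)

lemma sq_dvd_prod_add_mul_sub {R ι : Type*} [CommRing R] [DecidableEq ι] (P : R) (r c : ι → R)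
    (s : Finset ι) :
    P ^ 2 ∣ ∏ j ∈ s, (r j + P * c j) - ∏ j ∈ s, r j
      - P * ∑ j ∈ s, c j * ∏ i ∈ s.erase j, r i := by
  induction s using Finset.induction_on with
  | empty => simp
  | insert j₀ s hj₀ ih =>
    obtain ⟨k, hk⟩ := ih
    have hsum : ∑ j ∈ insert j₀ s, c j * ∏ i ∈ (insert j₀ s).erase j, r i
        = c j₀ * ∏ i ∈ s, r i + r j₀ * ∑ j ∈ s, c j * ∏ i ∈ s.erase j, r i := by
      rw [sum_insert hj₀, erase_insert hj₀, mul_sum]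
      congr 1
      refine sum_congr rfl fun j hj => ?_
      rw [erase_insert_of_ne (ne_of_mem_of_not_mem hj hj₀).symm,
        prod_insert fun h => hj₀ (mem_of_mem_erase h)]
      ring
    refine ⟨c j₀ * ∑ j ∈ s, c j * ∏ i ∈ s.erase j, r i + (r j₀ + P * c j₀) * k, ?_⟩
    rw [prod_insert hj₀, prod_insert hj₀, hsum]
    linear_combination (r j₀ + P * c j₀) * hk

section Harmonic

variable {p : ℕ} [Fact p.Prime]

lemma sum_Ioc_inv_eq_neg_harmonicMod_sub {n : ℕ} (hn : n ≤ p - 1) :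
    ∑ j ∈ Ioc n (p - 1), (j : ZMod p)⁻¹ = -harmonicMod p (p - 1 - n) := by
  rw [harmonicMod, ← sum_neg_distrib]
  refine sum_nbij' (fun j => p - j) (fun k => p - k) ?_ ?_ ?_ ?_ ?_ <;>
    intro j hj <;> simp only [mem_Ioc] at hj ⊢
  · omega
  · omega
  · omega
  · omega
  · rw [Nat.cast_sub (by omega), ZMod.natCast_self, zero_sub, inv_neg, neg_neg]

lemma harmonicMod_pred_eq_zero (hp2 : p ≠ 2) : harmonicMod p (p - 1) = 0 := by
  have h := sum_Ioc_inv_eq_neg_harmonicMod_sub (p := p) (Nat.zero_le _)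
  rw [Nat.sub_zero, ← harmonicMod] at h
  have h2 : (2 : ZMod p) ≠ 0 := by
    exact_mod_cast ZMod.natCast_ne_zero_of_pos_of_lt two_pos
      ((Fact.out : p.Prime).two_le.lt_of_ne' hp2)
  exact (mul_eq_zero.mp (by linear_combination h)).resolve_left h2

lemma sum_Ioc_inv_eq_neg_harmonicMod (hp2 : p ≠ 2) {n : ℕ} (hn : n ≤ p - 1) :
    ∑ j ∈ Ioc n (p - 1), (j : ZMod p)⁻¹ = -harmonicMod p n := by
  have h := sum_Ioc_consecutive (fun j => (j : ZMod p)⁻¹) (Nat.zero_le n) hn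
  rw [← harmonicMod, ← harmonicMod, harmonicMod_pred_eq_zero hp2] at h
  linear_combination h

lemma harmonicMod_pred_sub (hp2 : p ≠ 2) {n : ℕ} (hn : n ≤ p - 1) :
    harmonicMod p (p - 1 - n) = harmonicMod p n := by
  rw [← neg_inj, ← sum_Ioc_inv_eq_neg_harmonicMod_sub hn, sum_Ioc_inv_eq_neg_harmonicMod hp2 hn]

end Harmonic

section Prime

variable {p : ℕ} (hp : p.Prime)
include hp

lemma mul_mod_mem_Ioc {a j : ℕ} (ha : ¬ p ∣ a) (hj : j ∈ Ioc 0 (p - 1)) :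
    a * j % p ∈ Ioc 0 (p - 1) := by
  rw [mem_Ioc] at hj ⊢
  have hlt := Nat.mod_lt (a * j) hp.pos
  have hne : a * j % p ≠ 0 := fun h =>
    Nat.not_dvd_of_pos_of_lt hj.1 (by omega)
      ((hp.dvd_mul.mp (Nat.dvd_of_mod_eq_zero h)).resolve_left ha)
  omega

lemma prod_mul_mod_eq {a : ℕ} (ha : ¬ p ∣ a) :
    ∏ j ∈ Ioc 0 (p - 1), (a * j % p) = ∏ j ∈ Ioc 0 (p - 1), j := by
  have hmaps : Set.MapsTo (fun j => a * j % p) (Ioc 0 (p - 1)) (Ioc 0 (p - 1)) :=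
    fun j hj => mul_mod_mem_Ioc hp ha hj
  have hinj : Set.InjOn (fun j => a * j % p) (Ioc 0 (p - 1)) := by
    intro j hj k hk hjk
    simp only [coe_Ioc, Set.mem_Ioc] at hj hk
    have h := Nat.ModEq.cancel_left_of_coprime ((hp.coprime_iff_not_dvd).mpr ha)
      (hjk : a * j ≡ a * k [MOD p])
    rwa [Nat.ModEq, Nat.mod_eq_of_lt (by omega), Nat.mod_eq_of_lt (by omega)] at h
  exact prod_nbij (g := fun j => j) _ hmaps hinj
    (surjOn_of_injOn_of_card_le _ hmaps hinj le_rfl) fun _ _ => rfl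

lemma le_mul_div_iff_mul_div_lt {a i j : ℕ} (ha0 : 0 < a) (hap : a < p) (hj0 : 0 < j)
    (hjp : j < p) : i ≤ a * j / p ↔ i * p / a < j := by
  have hne : i * p ≠ a * j := fun h =>
    (hp.dvd_mul.mp (h ▸ dvd_mul_left p i)).elim (Nat.not_dvd_of_pos_of_lt ha0 hap)
      (Nat.not_dvd_of_pos_of_lt hj0 hjp)
  rw [Nat.le_div_iff_mul_le hp.pos, Nat.div_lt_iff_lt_mul ha0, mul_comm j]
  exact ⟨fun h => h.lt_of_ne hne, le_of_lt⟩

lemma natCast_mul_fermatQuotInt {a : ℤ} (ha : ¬ (p : ℤ) ∣ a) :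
    p * fermatQuotInt p a = a ^ (p - 1) - 1 :=
  Int.mul_ediv_cancel' <| Int.prime_dvd_pow_sub_one hp <|
    ((Nat.prime_iff_prime_int.mp hp).coprime_iff_not_dvd.mpr ha).symm

lemma fermatQuot_intCast {a : ℤ} (ha : ¬ (p : ℤ) ∣ a) :
    fermatQuot p a = fermatQuotInt p a := by
  rw [fermatQuot, div_eq_iff (by exact_mod_cast hp.ne_zero)]
  exact_mod_cast ((natCast_mul_fermatQuotInt hp ha).symm.trans (mul_comm _ _))

lemma fermatQuotInt_mul {a b : ℤ} (ha : ¬ (p : ℤ) ∣ a) (hb : ¬ (p : ℤ) ∣ b) :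
    (fermatQuotInt p (a * b) : ZMod p) = fermatQuotInt p a + fermatQuotInt p b := by
  have hab : ¬ (p : ℤ) ∣ a * b := (Nat.prime_iff_prime_int.mp hp).not_dvd_mul ha hb
  have h : fermatQuotInt p (a * b)
      = p * fermatQuotInt p a * fermatQuotInt p b + fermatQuotInt p a + fermatQuotInt p b := by
    refine mul_left_cancel₀ (Int.natCast_ne_zero.mpr hp.ne_zero) ?_
    linear_combination natCast_mul_fermatQuotInt hp hab
      - (p * fermatQuotInt p b + 1) * natCast_mul_fermatQuotInt hp ha
      - a ^ (p - 1) * natCast_mul_fermatQuotInt hp hb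
  rw [h]
  push_cast
  rw [ZMod.natCast_self]
  ring

lemma natCast_dvd_fermatQuotInt_mul_prod_sub {a : ℕ} (ha : ¬ p ∣ a) :
    (p : ℤ) ∣ fermatQuotInt p a * ∏ j ∈ Ioc 0 (p - 1), (j : ℤ)
      - ∑ j ∈ Ioc 0 (p - 1),
          ((a * j / p : ℕ) : ℤ) * ∏ i ∈ (Ioc 0 (p - 1)).erase j, ((a * i % p : ℕ) : ℤ) := by
  have hsplit : ∀ j, ((a * j % p : ℕ) : ℤ) + p * ((a * j / p : ℕ) : ℤ) = a * j := fun j => by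
    exact_mod_cast Nat.mod_add_div (a * j) p
  have hres : ∏ j ∈ Ioc 0 (p - 1), ((a * j % p : ℕ) : ℤ) = ∏ j ∈ Ioc 0 (p - 1), (j : ℤ) := by
    rw [← Nat.cast_prod, ← Nat.cast_prod, prod_mul_mod_eq hp ha]
  refine (mul_dvd_mul_iff_left (Int.natCast_ne_zero.mpr hp.ne_zero)).mp ?_
  convert sq_dvd_prod_add_mul_sub (p : ℤ) (fun j => ((a * j % p : ℕ) : ℤ))
    (fun j => ((a * j / p : ℕ) : ℤ)) (Ioc 0 (p - 1)) using 1
  · ring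
  · rw [hres]
    simp only [hsplit, prod_mul_distrib, prod_const, Nat.card_Ioc, Nat.sub_zero]
    linear_combination (∏ j ∈ Ioc 0 (p - 1), (j : ℤ)) * natCast_mul_fermatQuotInt hp (a := a)
      (by exact_mod_cast ha)

end Prime

section Lerch

variable {p : ℕ} [Fact p.Prime]

theorem fermatQuotInt_mul_eq_sum {a : ℕ} (ha : ¬ p ∣ a) :
    (fermatQuotInt p a : ZMod p) * a
      = ∑ j ∈ Ioc 0 (p - 1), ((a * j / p : ℕ) : ZMod p) * (j : ZMod p)⁻¹ := by
  have hdvd := natCast_dvd_fermatQuotInt_mul_prod_sub Fact.out ha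
  rw [← ZMod.intCast_zmod_eq_zero_iff_dvd] at hdvd
  simp only [Int.cast_sub, Int.cast_mul, Int.cast_sum, Int.cast_prod, Int.cast_natCast,
    ZMod.natCast_mod, Nat.cast_mul] at hdvd
  set s := Ioc 0 (p - 1)
  set W := ∏ j ∈ s, (j : ZMod p)
  have hp0 : 0 < p := (Fact.out : p.Prime).pos
  have hj0 : ∀ j ∈ s, (j : ZMod p) ≠ 0 := fun j hj => by
    rw [mem_Ioc] at hj
    exact ZMod.natCast_ne_zero_of_pos_of_lt hj.1 (by omega)
  have ha0 : (a : ZMod p) ≠ 0 := by rwa [Ne, ZMod.natCast_eq_zero_iff]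
  have hW0 : W ≠ 0 := prod_ne_zero_iff.mpr hj0
  have hall : ∏ i ∈ s, ((a : ZMod p) * i) = W := by
    rw [prod_mul_distrib, prod_const, Nat.card_Ioc, Nat.sub_zero,
      ZMod.pow_card_sub_one_eq_one ha0, one_mul]
  have herase : ∀ j ∈ s, ∏ i ∈ s.erase j, ((a : ZMod p) * i) = W / (a * j) := fun j hj =>
    eq_div_of_mul_eq (mul_ne_zero ha0 (hj0 j hj)) (hall ▸ prod_erase_mul _ _ hj)
  have hsum : ∑ j ∈ s, ((a * j / p : ℕ) : ZMod p) * ∏ i ∈ s.erase j, ((a : ZMod p) * i)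
      = W / a * ∑ j ∈ s, ((a * j / p : ℕ) : ZMod p) * (j : ZMod p)⁻¹ := by
    rw [mul_sum]
    exact sum_congr rfl fun j hj => by rw [herase j hj]; ring
  rw [hsum, sub_eq_zero] at hdvd
  calc (fermatQuotInt p a : ZMod p) * a = fermatQuotInt p a * W * a / W := by field_simp
    _ = _ := by rw [hdvd]; field_simp

lemma sum_div_mul_inv_eq_neg_sum_harmonicMod (hp2 : p ≠ 2) {a : ℕ} (ha0 : 0 < a) (hap : a < p) :
    ∑ j ∈ Ioc 0 (p - 1), ((a * j / p : ℕ) : ZMod p) * (j : ZMod p)⁻¹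
      = -∑ i ∈ Ioc 0 (a - 1), harmonicMod p (i * p / a) := by
  have hp : p.Prime := Fact.out
  have hp0 := hp.pos
  have hdiv_lt : ∀ {j}, j < p → a * j / p < a := fun hj =>
    Nat.div_lt_of_lt_mul (by rw [mul_comm p]; exact (Nat.mul_lt_mul_left ha0).mpr hj)
  calc ∑ j ∈ Ioc 0 (p - 1), ((a * j / p : ℕ) : ZMod p) * (j : ZMod p)⁻¹
      = ∑ j ∈ Ioc 0 (p - 1), ∑ i ∈ Ioc 0 (a * j / p), (j : ZMod p)⁻¹ := by
        simp only [sum_const, Nat.card_Ioc, Nat.sub_zero, nsmul_eq_mul]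
    _ = ∑ i ∈ Ioc 0 (a - 1), ∑ j ∈ Ioc (i * p / a) (p - 1), (j : ZMod p)⁻¹ := by
        refine sum_comm' fun j i => ?_
        simp only [mem_Ioc]
        constructor
        · rintro ⟨⟨hj0, hjp⟩, hi0, hij⟩
          have := hdiv_lt (j := j) (by omega)
          exact ⟨⟨(le_mul_div_iff_mul_div_lt hp ha0 hap hj0 (by omega)).mp hij, hjp⟩, hi0,
            by omega⟩
        · rintro ⟨⟨hij, hjp⟩, hi0, -⟩
          have hj0 : 0 < j := (Nat.zero_le _).trans_lt hij
          exact ⟨⟨hj0, hjp⟩, hi0, (le_mul_div_iff_mul_div_lt hp ha0 hap hj0 (by omega)).mpr hij⟩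
    _ = -∑ i ∈ Ioc 0 (a - 1), harmonicMod p (i * p / a) := by
        rw [← sum_neg_distrib]
        refine sum_congr rfl fun i hi => sum_Ioc_inv_eq_neg_harmonicMod hp2 ?_
        have : i * p / a < p := Nat.div_lt_of_lt_mul
          ((Nat.mul_lt_mul_right hp0).mpr (by rw [mem_Ioc] at hi; omega))
        omega

theorem fermatQuotInt_mul_eq_neg_sum_harmonicMod (hp2 : p ≠ 2) {a : ℕ} (ha0 : 0 < a)
    (hap : a < p) :
    (fermatQuotInt p a : ZMod p) * a = -∑ i ∈ Ioc 0 (a - 1), harmonicMod p (i * p / a) :=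
  (fermatQuotInt_mul_eq_sum (Nat.not_dvd_of_pos_of_lt ha0 hap)).trans
    (sum_div_mul_inv_eq_neg_sum_harmonicMod hp2 ha0 hap)

end Lerch

lemma two_mul_harmonicMod_div_six {p : ℕ} (hp : p.Prime) (hp5 : 5 < p) :
    2 * harmonicMod p (p / 6)
      = -(4 * (fermatQuotInt p 2 : ZMod p) + 3 * (fermatQuotInt p 3 : ZMod p)) := by
  have := Fact.mk hp
  have hp2 : p ≠ 2 := by omega
  have hmod : p % 6 = 1 ∨ p % 6 = 5 := by
    have h2 := hp.eq_one_or_self_of_dvd 2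
    have h3 := hp.eq_one_or_self_of_dvd 3
    omega
  have e2 := fermatQuotInt_mul_eq_neg_sum_harmonicMod hp2 (a := 2) (by norm_num) (by omega)
  have e3 := fermatQuotInt_mul_eq_neg_sum_harmonicMod hp2 (a := 3) (by norm_num) (by omega)
  have e6 := fermatQuotInt_mul_eq_neg_sum_harmonicMod hp2 (a := 6) (by norm_num) (by omega)
  have q6 : (fermatQuotInt p 6 : ZMod p) = fermatQuotInt p 2 + fermatQuotInt p 3 :=
    fermatQuotInt_mul hp (a := 2) (b := 3)
      (by exact_mod_cast Nat.not_dvd_of_pos_of_lt (by norm_num) (by omega : 2 < p))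
      (by exact_mod_cast Nat.not_dvd_of_pos_of_lt (by norm_num) (by omega : 3 < p))
  have s3 : harmonicMod p (2 * p / 3) = harmonicMod p (p / 3) := by
    rw [← harmonicMod_pred_sub hp2 (n := p / 3) (by omega)]
    congr 1
    omega
  have s6 : harmonicMod p (5 * p / 6) = harmonicMod p (p / 6) := by
    rw [← harmonicMod_pred_sub hp2 (n := p / 6) (by omega)]
    congr 1
    omega
  simp (disch := decide) only [show Ioc 0 (2 - 1) = {1} from rfl,
    show Ioc 0 (3 - 1) = {1, 2} from rfl, show Ioc 0 (6 - 1) = {1, 2, 3, 4, 5} from rfl,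
    sum_insert, sum_singleton] at e2 e3 e6
  rw [show 2 * p / 6 = p / 3 by omega, show 3 * p / 6 = p / 2 by omega,
    show 4 * p / 6 = 2 * p / 3 by omega, s3, s6] at e6
  rw [s3] at e3
  push_cast [one_mul] at e2 e3 e6
  linear_combination e6 - e3 - e2 - 6 * q6

lemma pCong_one_of_intCast_eq {p : ℕ} {x y : ℚ} {d N M : ℤ} (hd : (d : ZMod p) ≠ 0)
    (hx : d * x = N) (hy : d * y = M) (h : (N : ZMod p) = M) : pCong p 1 x y := by
  obtain ⟨t, ht⟩ := (ZMod.intCast_eq_intCast_iff_dvd_sub M N p).mp h.symm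
  have hd0 : (d : ℚ) ≠ 0 := by
    rintro hd0
    exact hd (by rw [Int.cast_eq_zero.mp hd0, Int.cast_zero])
  refine ⟨t / d, ?_, fun hden => hd ?_⟩
  · have ht' : (N : ℚ) - M = p * t := by exact_mod_cast ht
    rw [pow_one, mul_div_assoc', eq_div_iff hd0, ← ht', ← hx, ← hy]
    ring
  · rw [ZMod.intCast_zmod_eq_zero_iff_dvd]
    refine (Int.natCast_dvd_natCast.mpr hden).trans ?_
    rw [← Rat.divInt_eq_div]
    exact Rat.den_dvd t d

lemma H_eq_sum_Ioc (n : ℕ) : H n = ∑ j ∈ Ioc 0 n, (1 : ℚ) / j := by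
  induction n with
  | zero => rfl
  | succ n ih => rw [H, sum_range_succ, ← H, ih, sum_Ioc_succ_top (Nat.zero_le n), Nat.cast_succ]

lemma exists_factorial_mul_H_eq {p n : ℕ} [Fact p.Prime] (hn : n < p) :
    ∃ N : ℤ, (n ! : ℚ) * H n = N ∧ (N : ZMod p) = n ! * harmonicMod p n := by
  have hdvd : ∀ j ∈ Ioc 0 n, j ∣ n ! := fun j hj => by
    rw [mem_Ioc] at hj
    exact Nat.dvd_factorial hj.1 hj.2
  refine ⟨∑ j ∈ Ioc 0 n, (n ! / j : ℕ), ?_, ?_⟩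
  · rw [H_eq_sum_Ioc, mul_sum, Int.cast_sum]
    refine sum_congr rfl fun j hj => ?_
    have hj0 : (j : ℚ) ≠ 0 := by exact_mod_cast (mem_Ioc.mp hj).1.ne'
    rw [Int.cast_natCast, Nat.cast_div (hdvd j hj) hj0, mul_one_div]
  · rw [harmonicMod, mul_sum, Int.cast_sum]
    refine sum_congr rfl fun j hj => ?_
    have hj0 : (j : ZMod p) ≠ 0 :=
      ZMod.natCast_ne_zero_of_pos_of_lt (mem_Ioc.mp hj).1 ((mem_Ioc.mp hj).2.trans_lt hn)
    rw [Int.cast_natCast, eq_mul_inv_iff_mul_eq₀ hj0, ← Nat.cast_mul,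
      Nat.div_mul_cancel (hdvd j hj)]

theorem stmt_4 (p : ℕ) (hp : p.Prime) (hp5 : 5 < p) :
    pCong p 1 (H (p / 6)) (-2 * fermatQuot p 2 - 3 / 2 * fermatQuot p 3) := by
  have := Fact.mk hp
  set m := p / 6
  obtain ⟨N, hN, hNmod⟩ := exists_factorial_mul_H_eq (p := p) (n := m) (by omega)
  have hq : ∀ a : ℕ, 0 < a → a < p → fermatQuot p a = fermatQuotInt p a := fun a ha0 hap =>
    fermatQuot_intCast hp (by exact_mod_cast Nat.not_dvd_of_pos_of_lt ha0 hap)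
  have hq2 := hq 2 (by norm_num) (by omega)
  have hq3 := hq 3 (by norm_num) (by omega)
  push_cast at hq2 hq3
  refine pCong_one_of_intCast_eq (d := 2 * m !) (N := 2 * N)
    (M := -m ! * (4 * fermatQuotInt p 2 + 3 * fermatQuotInt p 3)) ?_ ?_ ?_ ?_
  · push_cast
    exact mul_ne_zero (by exact_mod_cast ZMod.natCast_ne_zero_of_pos_of_lt two_pos (by omega))
      (by rw [Ne, ZMod.natCast_eq_zero_iff, hp.dvd_factorial]; omega)
  · push_cast
    rw [mul_assoc, hN]
  · rw [hq2, hq3]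
    push_cast
    ring
  · push_cast
    rw [hNmod]
    linear_combination (m ! : ZMod p) * two_mul_harmonicMod_div_six hp hp5
end

section
/- For any prime p > 5, H_{⌊p/3⌋}^{(2)} ≡ (1/2)·(p/3)·B_{p-2}(1/3) (mod p), where H_n^{(2)} = ∑_{k=1}^{n} 1/k², (p/3) is the Legendre symbol, and B_n(x) is the n-th Bernoulli polynomial. -/
/-- The `n`-th generalized harmonic number of order 2. -/
def H2 (n : ℕ) : ℚ := ∑ k ∈ Finset.range n, (1 : ℚ) / (k + 1) ^ 2

instance : Fact (Nat.Prime 3) := ⟨by norm_num⟩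

/-!
By Fermat's little theorem `1 / k ^ 2 ≡ k ^ (p - 3) (mod p)` for `0 < k < p`, so `H2 ⌊p/3⌋` is
congruent to a power sum, which Faulhaber's formula evaluates as `B_{p-2}(⌊p/3⌋ + 1) / (p - 2)`
because `B_{p-2} = 0`; moreover `1 / (p - 2) ≡ -1 / 2`. By von Staudt–Clausen the polynomial
`B_{p-2}` has `p`-integral coefficients, so its value at `⌊p/3⌋ + 1` only depends on this point
modulo `p`, where it is `2/3` if `p ≡ 1` and `1/3` if `p ≡ 2 (mod 3)`. Finally the reflection
`B_n(1 - x) = -B_n(x)` for odd `n` turns `B_{p-2}(2/3)` into `-B_{p-2}(1/3)`, which is where the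
Legendre symbol comes from.
-/

open Finset
open scoped Polynomial

namespace Polynomial

section Subring

variable {R : Type*} [Ring R] {S : Subring R} {f : R[X]}

theorem lifts_subtype_of_coeff_mem (hf : ∀ i, f.coeff i ∈ S) : f ∈ lifts S.subtype :=
  (lifts_iff_coeff_lifts f).2 fun i => ⟨⟨_, hf i⟩, rfl⟩

theorem eval_mem_of_coeff_mem (hf : ∀ i, f.coeff i ∈ S) {x : R} (hx : x ∈ S) :
    f.eval x ∈ S := by
  obtain ⟨g, rfl⟩ := lifts_subtype_of_coeff_mem hf
  lift x to S using hx
  rw [coe_mapRingHom, eval_map, ← Subring.coe_subtype, eval₂_at_apply]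
  exact SetLike.coe_mem _

end Subring

theorem exists_mem_eval_sub_eq_mul {R : Type*} [CommRing R] {S : Subring R} {f : R[X]}
    (hf : ∀ i, f.coeff i ∈ S) {x y : R} (hx : x ∈ S) (hy : y ∈ S) :
    ∃ c ∈ S, f.eval x - f.eval y = (x - y) * c := by
  obtain ⟨g, rfl⟩ := lifts_subtype_of_coeff_mem hf
  lift x to S using hx
  lift y to S using hy
  obtain ⟨c, hc⟩ := sub_dvd_eval_sub x y g
  refine ⟨c, c.2, ?_⟩
  rw [coe_mapRingHom, eval_map, eval_map, ← Subring.coe_subtype, eval₂_at_apply,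
    eval₂_at_apply, ← map_sub, hc, map_mul, map_sub]

end Polynomial

abbrev pIntegers (p : ℕ) [Fact p.Prime] : Subring ℚ := (Rat.padicValuation p).integer

section PIntegers

variable {p : ℕ} [hp : Fact p.Prime]

theorem mem_pIntegers_iff {x : ℚ} : x ∈ pIntegers p ↔ ¬ p ∣ x.den :=
  Rat.padicValuation_le_one_iff

theorem inv_natCast_mem_pIntegers {k : ℕ} (hk : ¬ p ∣ k) : (k : ℚ)⁻¹ ∈ pIntegers p := by
  rw [mem_pIntegers_iff, Rat.inv_natCast_den]
  split_ifs
  · exact hp.out.not_dvd_one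
  · exact hk

theorem bernoulli_mem_pIntegers {n : ℕ} (hn : n < p - 1) : bernoulli n ∈ pIntegers p := by
  obtain ⟨k, rfl | rfl⟩ := n.even_or_odd'
  · rcases k.eq_zero_or_pos with rfl | hk
    · simp
    obtain ⟨z, hz⟩ := Bernoulli.vonStaudt_clausen k
    rw [eq_sub_of_add_eq hz.symm]
    refine sub_mem (intCast_mem _ z) (sum_mem fun q hq => ?_)
    obtain ⟨-, hq, hqk⟩ := mem_filter.1 hq
    have hqk_le : q - 1 ≤ 2 * k := Nat.le_of_dvd (by omega) hqk
    have hq2 := hq.two_le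
    rw [one_div]
    exact inv_natCast_mem_pIntegers (Nat.not_dvd_of_pos_of_lt (by omega) (by omega))
  · rcases k.eq_zero_or_pos with rfl | hk
    · have h2 : ¬ p ∣ 2 := Nat.not_dvd_of_pos_of_lt two_pos (by omega)
      simpa [bernoulli_one, neg_div] using neg_mem (inv_natCast_mem_pIntegers h2)
    rw [bernoulli_eq_zero_of_odd (odd_two_mul_add_one k) (by omega)]
    exact zero_mem _

theorem coeff_bernoulli_mem_pIntegers {n : ℕ} (hn : n < p - 1) (i : ℕ) :
    (Polynomial.bernoulli n).coeff i ∈ pIntegers p := by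
  rw [Polynomial.coeff_bernoulli]
  split_ifs
  · exact mul_mem (bernoulli_mem_pIntegers (by omega)) (natCast_mem _ _)
  · exact zero_mem _

theorem pCong_one_iff_div_mem {a b : ℚ} : pCong p 1 a b ↔ (a - b) / p ∈ pIntegers p := by
  have hp0 : (p : ℚ) ≠ 0 := by exact_mod_cast hp.out.ne_zero
  refine ⟨fun ⟨r, hab, hr⟩ => ?_, fun h => ⟨_, ?_, mem_pIntegers_iff.1 h⟩⟩
  · rwa [hab, pow_one, mul_div_cancel_left₀ _ hp0, mem_pIntegers_iff]
  · rw [pow_one, mul_div_cancel₀ _ hp0]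

theorem pCong_of_eq_mul {a b r : ℚ} (h : a - b = p * r) (hr : r ∈ pIntegers p) :
    pCong p 1 a b :=
  ⟨r, by rw [h, pow_one], mem_pIntegers_iff.1 hr⟩

theorem pCong.trans {a b c : ℚ} (hab : pCong p 1 a b) (hbc : pCong p 1 b c) :
    pCong p 1 a c := by
  rw [pCong_one_iff_div_mem] at *
  convert add_mem hab hbc using 1
  ring

theorem pCong.mul_left {a b c : ℚ} (hab : pCong p 1 a b) (hc : c ∈ pIntegers p) :
    pCong p 1 (c * a) (c * b) := by
  rw [pCong_one_iff_div_mem] at *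
  convert mul_mem hc hab using 1
  ring

theorem pCong_sum {ι : Type*} (s : Finset ι) {f g : ι → ℚ}
    (h : ∀ i ∈ s, pCong p 1 (f i) (g i)) : pCong p 1 (∑ i ∈ s, f i) (∑ i ∈ s, g i) := by
  simp only [pCong_one_iff_div_mem] at *
  rw [← sum_sub_distrib, sum_div]
  exact sum_mem h

theorem pCong_eval {f : ℚ[X]} (hf : ∀ i, f.coeff i ∈ pIntegers p) {x y : ℚ}
    (hx : x ∈ pIntegers p) (hy : y ∈ pIntegers p) (hxy : pCong p 1 x y) :
    pCong p 1 (f.eval x) (f.eval y) := by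
  obtain ⟨c, hc, hxyc⟩ := Polynomial.exists_mem_eval_sub_eq_mul hf hx hy
  rw [pCong_one_iff_div_mem] at *
  rw [hxyc, mul_div_right_comm]
  exact mul_mem hxy hc

end PIntegers

section Congruences

variable {p : ℕ} [hp : Fact p.Prime]

theorem one_div_pow_pCong {k m : ℕ} (hk : ¬ p ∣ k) (hm : m ≤ p - 1) :
    pCong p 1 (1 / (k : ℚ) ^ m) ((k : ℚ) ^ (p - 1 - m)) := by
  have hcop : IsCoprime (k : ℤ) p :=
    Nat.isCoprime_iff_coprime.2 (hp.out.coprime_iff_not_dvd.2 hk).symm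
  obtain ⟨t, ht⟩ := (Int.ModEq.pow_card_sub_one_eq_one hp.out hcop).symm.dvd
  have ht' : (k : ℚ) ^ (p - 1) - 1 = p * t := by exact_mod_cast ht
  have hsplit : (k : ℚ) ^ (p - 1) = (k : ℚ) ^ (p - 1 - m) * (k : ℚ) ^ m := by
    rw [← pow_add, Nat.sub_add_cancel hm]
  have hk0 : (k : ℚ) ≠ 0 := by rintro h; exact hk (by simp_all)
  refine pCong_of_eq_mul (r := -t * (k : ℚ)⁻¹ ^ m) ?_
    (mul_mem (neg_mem (intCast_mem _ t)) (pow_mem (inv_natCast_mem_pIntegers hk) m))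
  rw [inv_pow]
  field_simp
  linear_combination -ht' + hsplit

theorem H2_pCong_sum_range_pow (hp3 : 3 < p) {n : ℕ} (hn : n < p) :
    pCong p 1 (H2 n) (∑ k ∈ range (n + 1), (k : ℚ) ^ (p - 3)) := by
  rw [sum_range_succ', Nat.cast_zero, zero_pow (by omega), add_zero, H2]
  refine pCong_sum _ fun k hk => ?_
  have hk' : ¬ p ∣ k + 1 := Nat.not_dvd_of_pos_of_lt k.succ_pos (by simp at hk; omega)
  simpa [show p - 1 - 2 = p - 3 by omega] using one_div_pow_pCong hk' (m := 2) (by omega)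

theorem sum_range_pow_pCong (hp5 : 5 ≤ p) (n : ℕ) :
    pCong p 1 (∑ k ∈ range n, (k : ℚ) ^ (p - 3))
      (-(1 / 2) * (Polynomial.bernoulli (p - 2)).eval (n : ℚ)) := by
  have hodd : Odd (p - 2) := Nat.Odd.sub_even (by omega) (hp.out.odd_of_ne_two (by omega)) even_two
  have hF := Polynomial.sum_range_pow_eq_bernoulli_sub n (p - 3)
  rw [show (p - 3).succ = p - 2 by omega, bernoulli_eq_zero_of_odd hodd (by omega), sub_zero,
    Nat.cast_sub (by omega)] at hF
  set B := (Polynomial.bernoulli (p - 2)).eval (n : ℚ)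
  have hB : B ∈ pIntegers p :=
    Polynomial.eval_mem_of_coeff_mem (coeff_bernoulli_mem_pIntegers (by omega)) (natCast_mem _ n)
  have hden : ¬ p ∣ 2 * (p - 2) := fun h => by
    rcases hp.out.dvd_mul.1 h with h | h <;> exact Nat.not_dvd_of_pos_of_lt (by omega) (by omega) h
  refine pCong_of_eq_mul (r := B * ((2 * (p - 2) : ℕ) : ℚ)⁻¹) ?_
    (mul_mem hB (inv_natCast_mem_pIntegers hden))
  have hp2 : (p : ℚ) - 2 ≠ 0 := by
    have : (5 : ℚ) ≤ p := by exact_mod_cast hp5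
    linarith
  push_cast [Nat.cast_sub (show 2 ≤ p by omega)] at hF ⊢
  field_simp
  linear_combination 2 * hF

theorem bernoulli_eval_div_three_add_one_pCong (hp3 : p ≠ 3) {m : ℕ} (hm : Odd m)
    (hmp : m < p - 1) :
    pCong p 1 ((Polynomial.bernoulli m).eval ((p / 3 + 1 : ℕ) : ℚ))
      (-(legendreSym 3 p : ℚ) * (Polynomial.bernoulli m).eval (1 / 3)) := by
  have h3 : ¬ p ∣ 3 := fun h => hp3 ((Nat.prime_dvd_prime_iff_eq hp.out Nat.prime_three).1 h)
  have hthird : (1 / 3 : ℚ) ∈ pIntegers p := by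
    simpa using inv_natCast_mem_pIntegers h3
  have hcong (y : ℚ) (hy : y ∈ pIntegers p) (h : 3 * ((p / 3 + 1 : ℕ) : ℚ) = p + 3 * y) :
      pCong p 1 ((Polynomial.bernoulli m).eval ((p / 3 + 1 : ℕ) : ℚ))
        ((Polynomial.bernoulli m).eval y) :=
    pCong_eval (coeff_bernoulli_mem_pIntegers hmp) (natCast_mem _ _) hy
      (pCong_of_eq_mul (by linear_combination h / 3) hthird)
  have hmod : p % 3 = 1 ∨ p % 3 = 2 := by
    have : p % 3 ≠ 0 := fun h =>
      hp3 ((Nat.prime_dvd_prime_iff_eq Nat.prime_three hp.out).1 (Nat.dvd_of_mod_eq_zero h)).symm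
    omega
  rcases hmod with h | h
  · have hleg : legendreSym 3 p = 1 := by
      rw [legendreSym.mod, show (p : ℤ) % ((3 : ℕ) : ℤ) = 1 by omega]
      decide
    have hrefl := Polynomial.bernoulli_eval_one_sub m (1 / 3)
    rw [hm.neg_one_pow] at hrefl
    convert hcong (2 / 3) (by convert add_mem hthird hthird using 1; norm_num) ?_ using 1
    · rw [hleg, show (2 / 3 : ℚ) = 1 - 1 / 3 by norm_num, hrefl]
      push_cast; ring
    · have h' : ((3 * (p / 3 + 1) : ℕ) : ℚ) = p + 2 := by
        exact_mod_cast (show 3 * (p / 3 + 1) = p + 2 by omega)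
      push_cast at h' ⊢
      linarith
  · have hleg : legendreSym 3 p = -1 := by
      rw [legendreSym.mod, show (p : ℤ) % ((3 : ℕ) : ℤ) = 2 by omega]
      decide
    convert hcong (1 / 3) hthird ?_ using 1
    · rw [hleg]; push_cast; ring
    · have h' : ((3 * (p / 3 + 1) : ℕ) : ℚ) = p + 1 := by
        exact_mod_cast (show 3 * (p / 3 + 1) = p + 1 by omega)
      push_cast at h' ⊢
      linarith

end Congruences

theorem stmt_5 (p : ℕ) (hp : p.Prime) (hp5 : 5 < p) :
    pCong p 1 (H2 (p / 3))
      (1 / 2 * (legendreSym 3 p : ℚ) * (Polynomial.bernoulli (p - 2)).eval (1 / 3 : ℚ)) := by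
  have := Fact.mk hp
  have hodd : Odd (p - 2) := Nat.Odd.sub_even (by omega) (hp.odd_of_ne_two (by omega)) even_two
  have hhalf : -(1 / 2 : ℚ) ∈ pIntegers p := by
    simpa using neg_mem (inv_natCast_mem_pIntegers (Nat.not_dvd_of_pos_of_lt two_pos (by omega)))
  have h := (H2_pCong_sum_range_pow (by omega) (Nat.div_lt_self hp.pos (by norm_num))).trans
    ((sum_range_pow_pCong (by omega) _).trans
      ((bernoulli_eval_div_three_add_one_pCong (by omega) hodd (by omega)).mul_left hhalf))
  convert h using 1
  ring
end

section
/- For every positive integer n, ∑_{k=0}^{n} C(n,k)·C(n+k,k)·(-1)^k/(3k+4) = -1/((3n-1)(3n+1)(3n+4)) · ∏_{k=1}^{n} (3k-1)/(3k-2). -/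
/-!
With `F n k` the summand and the certificate `G n k = 2 (-1)^(k-1) C(n,k-1) C(n+k,k-1)` (and `G n 0 = 0`),
`(F, G)` is a WZ pair: `(3n+7) F (n+1) k - (3n-1) F n k = G n (k+1) - G n k`. Summing over `k` telescopes to
the first-order recurrence `(3n+7) S(n+1) = (3n-1) S(n)`, which the right-hand side also satisfies;
both sides equal `1/4` at `n = 0`.
-/

namespace SaalschutzSum

def summand (n k : ℕ) : ℚ :=
  (n.choose k : ℚ) * ((n + k).choose k : ℚ) * (-1) ^ k / (3 * k + 4)

def wzCert (n : ℕ) : ℕ → ℚ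
  | 0 => 0
  | j + 1 => 2 * (-1) ^ j * (n.choose j : ℚ) * ((n + j + 1).choose j : ℚ)

lemma cast_choose_succ_mul (n j : ℕ) :
    (n.choose (j + 1) : ℚ) * (j + 1) = n.choose j * (n - j) := by
  rcases le_or_gt j n with hj | hj
  · rw [← Nat.cast_sub hj]
    exact_mod_cast Nat.choose_succ_right_eq n j
  · simp [Nat.choose_eq_zero_of_lt hj, Nat.choose_eq_zero_of_lt (Nat.lt_succ_of_lt hj)]

lemma summand_wz (n k : ℕ) :
    (3 * n + 7) * summand (n + 1) k - (3 * n - 1) * summand n k = wzCert n (k + 1) - wzCert n k := by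
  cases k with
  | zero =>
    simp only [summand, wzCert, Nat.choose_zero_right, add_zero, Nat.cast_zero, Nat.cast_one]
    ring
  | succ j =>
    have hj : (j + 1 : ℚ) ≠ 0 := by positivity
    have hp : ((n + 1).choose (j + 1) : ℚ) = (n + 1) * n.choose j / (j + 1) := by
      rw [eq_div_iff hj]; exact_mod_cast (Nat.add_one_mul_choose_eq n j).symm
    have hq : ((n + 1 + (j + 1)).choose (j + 1) : ℚ) = (n + j + 2) * (n + j + 1).choose j / (j + 1) := by
      rw [eq_div_iff hj, show n + 1 + (j + 1) = n + j + 1 + 1 by ring]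
      exact_mod_cast (Nat.add_one_mul_choose_eq (n + j + 1) j).symm
    have hr : (n.choose (j + 1) : ℚ) = n.choose j * (n - j) / (j + 1) := by
      rw [eq_div_iff hj, cast_choose_succ_mul]
    have hs : ((n + (j + 1)).choose (j + 1) : ℚ) = (n + j + 1).choose j * (n + 1) / (j + 1) := by
      rw [eq_div_iff hj, ← add_assoc, cast_choose_succ_mul]
      push_cast
      ring
    have hq' : n + (j + 1) + 1 = n + 1 + (j + 1) := by ring
    simp only [summand, wzCert, hq']
    rw [hp, hq, hr, hs]
    push_cast
    field_simp
    ring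

lemma summand_self_add_one (n : ℕ) : summand n (n + 1) = 0 := by
  simp [summand, Nat.choose_succ_self]

lemma wzCert_self_add_two (n : ℕ) : wzCert n (n + 2) = 0 := by
  simp [wzCert, Nat.choose_succ_self]

lemma sum_summand_recurrence (n : ℕ) :
    (3 * n + 7) * ∑ k ∈ Finset.range (n + 2), summand (n + 1) k
      = (3 * n - 1) * ∑ k ∈ Finset.range (n + 1), summand n k := by
  have htel := Finset.sum_range_sub (wzCert n) (n + 2)
  simp only [← summand_wz, Finset.sum_sub_distrib, ← Finset.mul_sum, wzCert_self_add_two] at htel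
  rw [Finset.sum_range_succ (summand n), summand_self_add_one] at htel
  simp only [wzCert, add_zero, sub_zero] at htel
  exact sub_eq_zero.mp htel

def closedForm (n : ℕ) : ℚ :=
  -1 / ((3 * (n : ℚ) - 1) * (3 * n + 1) * (3 * n + 4)) *
    ∏ k ∈ Finset.Icc 1 n, ((3 * (k : ℚ) - 1) / (3 * k - 2))

lemma closedForm_recurrence (n : ℕ) :
    (3 * n + 7) * closedForm (n + 1) = (3 * n - 1) * closedForm n := by
  have h₁ : (3 * n - 1 : ℚ) ≠ 0 := sub_ne_zero.mpr (by norm_cast; omega)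
  have h₂ : (3 * (n + 1) - 1 : ℚ) ≠ 0 := by ring_nf; positivity
  have h₃ : (3 * (n + 1) - 2 : ℚ) ≠ 0 := by ring_nf; positivity
  rw [closedForm, closedForm, Finset.prod_Icc_succ_top (by omega)]
  generalize ∏ k ∈ Finset.Icc 1 n, ((3 * (k : ℚ) - 1) / (3 * k - 2)) = P
  push_cast
  field_simp
  ring

end SaalschutzSum

theorem stmt_8_general (n : ℕ) :
    ∑ k ∈ Finset.range (n + 1),
        (n.choose k : ℚ) * ((n + k).choose k : ℚ) * (-1) ^ k / (3 * k + 4)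
      = -1 / ((3 * (n : ℚ) - 1) * (3 * n + 1) * (3 * n + 4)) *
          ∏ k ∈ Finset.Icc 1 n, ((3 * (k : ℚ) - 1) / (3 * k - 2)) := by
  show ∑ k ∈ Finset.range (n + 1), SaalschutzSum.summand n k = SaalschutzSum.closedForm n
  induction n with
  | zero => norm_num [SaalschutzSum.summand, SaalschutzSum.closedForm]
  | succ n ih =>
    have h : (3 * n + 7 : ℚ) ≠ 0 := by positivity
    apply mul_left_cancel₀ h
    rw [SaalschutzSum.sum_summand_recurrence, SaalschutzSum.closedForm_recurrence, ih]

theorem stmt_8 (n : ℕ) (hn : 1 ≤ n) :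
    ∑ k ∈ Finset.range (n + 1),
        (n.choose k : ℚ) * ((n + k).choose k : ℚ) * (-1) ^ k / (3 * k + 4)
      = -1 / ((3 * (n : ℚ) - 1) * (3 * n + 1) * (3 * n + 4)) *
          ∏ k ∈ Finset.Icc 1 n, ((3 * (k : ℚ) - 1) / (3 * k - 2)) :=
  stmt_8_general n
end

section
/- For every positive integer n, ∑_{j=0}^{n} C(n,j)·C(n+j,j)·(-1)^j·(H_{2j} - H_j)/(3j+4) = -9(2n+1)/(10(3n-1)(3n+4)) + [(2/3)_n / ((3n-1)(3n+1)(3n+4)·(1/3)_n)] · (9/10 + ∑_{k=1}^{n} (1/3)_k/(k·(2/3)_k)). -/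
/-- The Pochhammer symbol (shifted factorial) `(a)_n = a(a+1)⋯(a+n-1)`. -/
def poch (a : ℚ) (n : ℕ) : ℚ := ∏ i ∈ Finset.range n, (a + i)

open Finset

lemma H_two_mul_succ_sub_H_succ (j : ℕ) :
    H (2 * (j + 1)) - H (j + 1) = H (2 * j) - H j + 1 / ((2 * j + 1) * (2 * j + 2)) := by
  rw [show 2 * (j + 1) = 2 * j + 1 + 1 by ring]
  simp only [H, sum_range_succ]
  push_cast
  field_simp
  ring

lemma poch_succ (a : ℚ) (n : ℕ) : poch a (n + 1) = poch a n * (a + n) :=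
  prod_range_succ _ _

lemma poch_pos {a : ℚ} (ha : 0 < a) (n : ℕ) : 0 < poch a n :=
  prod_pos fun _ _ => by positivity

section Choose

variable {K : Type*} [Field K] [CharZero K]

lemma cast_choose_succ_right_eq_div {m j : ℕ} (hj : j ≤ m) :
    (m.choose (j + 1) : K) = m.choose j * (m - j) / (j + 1) := by
  rw [eq_div_iff (Nat.cast_add_one_ne_zero _), ← Nat.cast_sub hj]
  exact_mod_cast Nat.choose_succ_right_eq m j

lemma cast_choose_eq_div_succ {m j : ℕ} (hj : j ≤ m + 1) :
    (m.choose j : K) = (m + 1).choose j * (m + 1 - j) / (m + 1) := by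
  rw [eq_div_iff (Nat.cast_add_one_ne_zero _)]
  have h : (m.choose j * (m + 1) : K) = (m + 1).choose j * ((m + 1 - j : ℕ) : K) := by
    exact_mod_cast Nat.choose_mul_succ_eq m j
  rwa [Nat.cast_sub hj, Nat.cast_succ] at h

lemma cast_add_choose_eq_div (m j : ℕ) :
    ((m + j).choose j : K) = (m + 1 + j).choose j * (m + 1) / (m + 1 + j) := by
  rw [cast_choose_eq_div_succ (by omega), show m + j + 1 = m + 1 + j by omega]
  push_cast
  ring

lemma cast_add_succ_choose_succ_eq_div (m j : ℕ) :
    ((m + (j + 1)).choose (j + 1) : K) = (m + j).choose j * (m + j + 1) / (j + 1) := by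
  rw [eq_div_iff (Nat.cast_add_one_ne_zero _), show m + (j + 1) = m + j + 1 by omega]
  exact_mod_cast (Nat.add_one_mul_choose_eq (m + j) j).symm.trans (mul_comm _ _)

end Choose

lemma sum_range_eq_zero_of_telescope {M : Type*} [AddCommGroup M] {a G : ℕ → M} {N : ℕ}
    (h : ∀ j ≤ N, a j = G (j + 1) - G j) (h0 : G 0 = 0) (hN : G (N + 1) = 0) :
    ∑ j ∈ range (N + 1), a j = 0 := by
  rw [sum_congr rfl fun j hj => h j (Nat.lt_succ_iff.mp (mem_range.mp hj)),
    sum_range_sub, h0, hN, sub_zero]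

lemma eq_of_recurrence {K : Type*} [CommRing K] [IsDomain K] {a b c S R : ℕ → K} {m : ℕ}
    (ha : ∀ n ≥ m, a n ≠ 0) (hS : ∀ n ≥ m, a n * S (n + 1) = b n * S n + c n)
    (hR : ∀ n ≥ m, a n * R (n + 1) = b n * R n + c n) (hm : S m = R m) :
    ∀ n ≥ m, S n = R n := by
  intro n hn
  induction n, hn using Nat.le_induction with
  | base => exact hm
  | succ n hn ih => exact mul_left_cancel₀ (ha n hn) (by rw [hS n hn, hR n hn, ih])

def auxSummand (n j : ℕ) : ℚ :=
  (-1) ^ j * n.choose j * (n + 1 + j).choose j / ((2 * j + 1) * (2 * j + 2))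

def auxCert (n j : ℕ) : ℚ :=
  (-1) ^ j * (n + 1).choose j * (n + 2 + j).choose j * (-(j : ℚ)) / (2 * (n + 1) * (n + 2 + j))

lemma auxSummand_telescope {n j : ℕ} (hj : j ≤ n + 1) :
    ((n : ℚ) + 2) * auxSummand (n + 1) j - ((n : ℚ) + 1) * auxSummand n j
      = auxCert n (j + 1) - auxCert n j := by
  have e1 := cast_choose_succ_right_eq_div (K := ℚ) hj
  have e2 := cast_choose_eq_div_succ (K := ℚ) hj
  have e3 := cast_add_choose_eq_div (K := ℚ) (n + 1) j
  have e4 := cast_add_succ_choose_succ_eq_div (K := ℚ) (n + 2) j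
  rw [show n + 1 + 1 + j = n + 2 + j by omega] at e3
  simp only [auxSummand, auxCert, e1, e2, e3, e4, pow_succ]
  push_cast
  field_simp
  ring

lemma sum_auxSummand (n : ℕ) : ∑ j ∈ range (n + 1), auxSummand n j = 1 / (2 * n + 2) := by
  refine eq_of_recurrence (a := fun m => (m : ℚ) + 2) (b := fun m => (m : ℚ) + 1) (c := fun _ => 0)
    (S := fun m => ∑ j ∈ range (m + 1), auxSummand m j) (R := fun m => 1 / (2 * (m : ℚ) + 2))
    (fun _ _ => by positivity) (fun n _ => ?_) (fun n _ => ?_) ?_ n n.zero_le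
  · have hvanish : auxSummand n (n + 1) = 0 := by simp [auxSummand]
    have htel := sum_range_eq_zero_of_telescope (G := auxCert n)
      (fun j hj => auxSummand_telescope hj) (by simp [auxCert]) (by simp [auxCert])
    rw [sum_sub_distrib, ← mul_sum, ← mul_sum, sum_range_succ (auxSummand n) (n + 1), hvanish,
      add_zero, sub_eq_zero] at htel
    simpa using htel
  · push_cast
    field_simp
    ring
  · simp [auxSummand]

def summand (n j : ℕ) : ℚ :=
  (n.choose j : ℚ) * ((n + j).choose j : ℚ) * (-1) ^ j * (H (2 * j) - H j) / (3 * j + 4)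

def summandCert (n j : ℕ) : ℚ :=
  (-1) ^ j * (n + 1).choose j * (n + 1 + j).choose j *
    (-2 * (j : ℚ) ^ 2 / ((n + 1) * (n + 1 + j))) * (H (2 * j) - H j)

lemma summand_telescope {n j : ℕ} (hj : j ≤ n + 1) :
    (3 * (n : ℚ) + 7) * summand (n + 1) j - (3 * (n : ℚ) - 1) * summand n j + 2 * auxSummand n j
      = summandCert n (j + 1) - summandCert n j := by
  have e1 := cast_choose_succ_right_eq_div (K := ℚ) hj
  have e2 := cast_choose_eq_div_succ (K := ℚ) hj
  have e3 := cast_add_choose_eq_div (K := ℚ) n j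
  have e4 := cast_add_succ_choose_succ_eq_div (K := ℚ) (n + 1) j
  simp only [summand, summandCert, auxSummand, e1, e2, e3, e4, H_two_mul_succ_sub_H_succ, pow_succ]
  push_cast
  field_simp
  ring

lemma sum_summand_recurrence (n : ℕ) :
    (3 * (n : ℚ) + 7) * ∑ j ∈ range (n + 1 + 1), summand (n + 1) j
      = (3 * (n : ℚ) - 1) * ∑ j ∈ range (n + 1), summand n j + -1 / ((n : ℚ) + 1) := by
  have hvanish : summand n (n + 1) = 0 := by simp [summand]
  have haux : ∑ j ∈ range (n + 1 + 1), auxSummand n j = 1 / (2 * n + 2) := by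
    rw [sum_range_succ, sum_auxSummand, show auxSummand n (n + 1) = 0 by simp [auxSummand],
      add_zero]
  have htel := sum_range_eq_zero_of_telescope (G := summandCert n)
    (fun j hj => summand_telescope hj) (by simp [summandCert]) (by simp [summandCert])
  rw [sum_add_distrib, sum_sub_distrib, ← mul_sum, ← mul_sum, ← mul_sum, haux,
    sum_range_succ (summand n) (n + 1), hvanish, add_zero] at htel
  field_simp at htel ⊢
  linear_combination htel

def closedForm (n : ℕ) : ℚ :=
  -(9 * (2 * (n : ℚ) + 1)) / (10 * (3 * n - 1) * (3 * n + 4))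
    + poch (2 / 3) n / ((3 * (n : ℚ) - 1) * (3 * n + 1) * (3 * n + 4) * poch (1 / 3) n) *
      (9 / 10 + ∑ k ∈ Icc 1 n, poch (1 / 3) k / (k * poch (2 / 3) k))

lemma closedForm_recurrence {n : ℕ} (hn : 1 ≤ n) :
    (3 * (n : ℚ) + 7) * closedForm (n + 1)
      = (3 * (n : ℚ) - 1) * closedForm n + -1 / ((n : ℚ) + 1) := by
  have hn' : (1 : ℚ) ≤ n := by exact_mod_cast hn
  have hp := (poch_pos (a := 1 / 3) (by norm_num) n).ne'
  have hq := (poch_pos (a := 2 / 3) (by norm_num) n).ne'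
  have hn₁ : 3 * (n : ℚ) - 1 ≠ 0 := by linarith
  have hn₂ : 3 * ((n : ℚ) + 1) - 1 ≠ 0 := by linarith
  simp only [closedForm, sum_Icc_succ_top (by omega : 1 ≤ n + 1), poch_succ]
  push_cast
  field_simp
  ring

theorem stmt_9 (n : ℕ) (hn : 1 ≤ n) :
    ∑ j ∈ Finset.range (n + 1),
        (n.choose j : ℚ) * ((n + j).choose j : ℚ) * (-1) ^ j * (H (2 * j) - H j) / (3 * j + 4)
      = -(9 * (2 * (n : ℚ) + 1)) / (10 * (3 * n - 1) * (3 * n + 4))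
        + poch (2 / 3) n / ((3 * (n : ℚ) - 1) * (3 * n + 1) * (3 * n + 4) * poch (1 / 3) n) *
          (9 / 10 + ∑ k ∈ Finset.Icc 1 n, poch (1 / 3) k / (k * poch (2 / 3) k)) :=
  eq_of_recurrence (a := fun m => 3 * (m : ℚ) + 7) (b := fun m => 3 * (m : ℚ) - 1)
    (c := fun m => -1 / ((m : ℚ) + 1))
    (S := fun m => ∑ j ∈ range (m + 1), summand m j) (R := closedForm)
    (fun _ _ => by positivity) (fun m _ => sum_summand_recurrence m)
    (fun _ hm => closedForm_recurrence hm)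
    (by norm_num [summand, closedForm, H, poch, sum_range_succ]) n hn
end

section
/- For every positive integer n and integer j with 0 ≤ 2j ≤ n-1, ∑_{k=2j}^{n-1} k³·C(k+j, 3j) = [j(j+1)(j+3) + n(2-j²)(3j+1) - n²(j+2)(3j+1)(3j+2) + n³(j+1)(3j+1)(3j+2)] / [(j+1)(3j+2)(3j+4)] · C(n+j, 3j+1). -/
/-!
The right-hand side `F n` vanishes at `n = 0`, and Pascal's rule together with
`C(N, r + 1) (r + 1) = C(N, r) (N - r)` shows `F (n + 1) - F n = n³ C(n + j, 3j)`, so the sum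
telescopes. The terms with `k < 2j` vanish, which lets the sum start at `0` instead of `2j`.
-/

open Finset

theorem Nat.cast_choose_succ_right_mul {R : Type*} [CommRing R] (n k : ℕ) :
    (n.choose (k + 1) : R) * (k + 1) = n.choose k * (n - k) := by
  rcases le_or_gt k n with hkn | hnk
  · have h := congr_arg ((↑) : ℕ → R) (Nat.choose_succ_right_eq n k)
    push_cast [hkn] at h
    exact h
  · simp [Nat.choose_eq_zero_of_lt hnk, Nat.choose_eq_zero_of_lt (hnk.trans k.lt_succ_self)]

namespace CubeChooseSum

def closedForm (j n : ℕ) : ℚ :=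
  ((j : ℚ) * (j + 1) * (j + 3) + n * (2 - (j : ℚ) ^ 2) * (3 * j + 1)
      - (n : ℚ) ^ 2 * (j + 2) * (3 * j + 1) * (3 * j + 2)
      + (n : ℚ) ^ 3 * (j + 1) * (3 * j + 1) * (3 * j + 2))
    / ((j + 1) * (3 * (j : ℚ) + 2) * (3 * j + 4)) * ((n + j).choose (3 * j + 1) : ℚ)

theorem closedForm_zero (j : ℕ) : closedForm j 0 = 0 := by
  simp [closedForm, Nat.choose_eq_zero_of_lt (by omega : j < 3 * j + 1)]

theorem closedForm_succ_sub (j n : ℕ) :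
    closedForm j (n + 1) - closedForm j n = (n : ℚ) ^ 3 * (n + j).choose (3 * j) := by
  have hpascal : ((n + 1 + j).choose (3 * j + 1) : ℚ)
      = (n + j).choose (3 * j) + (n + j).choose (3 * j + 1) := by
    rw [Nat.add_right_comm, Nat.choose_succ_succ', Nat.cast_add]
  have hratio : ((n + j).choose (3 * j + 1) : ℚ)
      = (n + j).choose (3 * j) * (n - 2 * j) / (3 * j + 1) := by
    have h := Nat.cast_choose_succ_right_mul (R := ℚ) (n + j) (3 * j)
    push_cast at h
    rw [eq_div_iff (by positivity)]
    linear_combination h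
  simp only [closedForm, hpascal, hratio]
  push_cast
  field_simp
  ring

theorem sum_range_cube_mul_choose (j n : ℕ) :
    ∑ k ∈ range n, (k : ℚ) ^ 3 * (k + j).choose (3 * j) = closedForm j n := by
  simp only [← closedForm_succ_sub, sum_range_sub, closedForm_zero, sub_zero]

theorem sum_Icc_cube_mul_choose_eq_sum_range (j n : ℕ) :
    ∑ k ∈ Icc (2 * j) (n - 1), (k : ℚ) ^ 3 * (k + j).choose (3 * j)
      = ∑ k ∈ range n, (k : ℚ) ^ 3 * (k + j).choose (3 * j) := by
  rcases n with _ | n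
  · refine sum_eq_zero fun k hk => ?_
    obtain rfl : k = 0 := by simpa using (mem_Icc.mp hk).2
    simp
  · refine sum_subset (fun k hk => by simp at hk ⊢; omega) fun k hkn hk => ?_
    have hk : k + j < 3 * j := by simp at hkn hk; omega
    simp [Nat.choose_eq_zero_of_lt hk]

end CubeChooseSum

theorem stmt_10_general (n j : ℕ) :
    ∑ k ∈ Finset.Icc (2 * j) (n - 1), (k : ℚ) ^ 3 * ((k + j).choose (3 * j) : ℚ)
      = ((j : ℚ) * (j + 1) * (j + 3) + n * (2 - (j : ℚ) ^ 2) * (3 * j + 1)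
          - (n : ℚ) ^ 2 * (j + 2) * (3 * j + 1) * (3 * j + 2)
          + (n : ℚ) ^ 3 * (j + 1) * (3 * j + 1) * (3 * j + 2))
        / ((j + 1) * (3 * (j : ℚ) + 2) * (3 * j + 4)) * ((n + j).choose (3 * j + 1) : ℚ) :=
  (CubeChooseSum.sum_Icc_cube_mul_choose_eq_sum_range j n).trans
    (CubeChooseSum.sum_range_cube_mul_choose j n)

theorem stmt_10 (n j : ℕ) (hn : 1 ≤ n) (hj : 2 * j ≤ n - 1) :
    ∑ k ∈ Finset.Icc (2 * j) (n - 1), (k : ℚ) ^ 3 * ((k + j).choose (3 * j) : ℚ)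
      = ((j : ℚ) * (j + 1) * (j + 3) + n * (2 - (j : ℚ) ^ 2) * (3 * j + 1)
          - (n : ℚ) ^ 2 * (j + 2) * (3 * j + 1) * (3 * j + 2)
          + (n : ℚ) ^ 3 * (j + 1) * (3 * j + 1) * (3 * j + 2))
        / ((j + 1) * (3 * (j : ℚ) + 2) * (3 * j + 4)) * ((n + j).choose (3 * j + 1) : ℚ) :=
  stmt_10_general n j
end

section
/- For every nonnegative integer n, ∑_{k=0}^{n} C(n,k)²·C(2k,k)·C(2n-2k, n-k) = ∑_{k=0}^{n} (-1)^k·C(n+2k, 3k)·C(2k,k)²·C(3k,k)·16^{n-k}. -/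
/-!
Both sides satisfy the Domb recurrence
`(n+2)³ u(n+2) - 2(2n+3)(5n²+15n+12) u(n+1) + 64(n+1)³ u(n) = 0`
and agree for `n = 0, 1`. For each side the recurrence is proved by creative telescoping: applied to
the summand `F(n, k)`, the recurrence operator equals `G(n, k+1) - G(n, k)` for an explicit
certificate `G(n, k) = R(n, k) F(n+2, k)` with `R` rational, so summing over `k` leaves only
boundary terms, which vanish. The certificate identity is checked by expressing every shifted summand
as a rational multiple of `F(n+2, k)`.
-/

open Nat Finset

theorem eq_of_linear_recurrence {K : Type*} [CommRing K] [IsDomain K] {a b c u v : ℕ → K}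
    (ha : ∀ n, a n ≠ 0)
    (hu : ∀ n, a n * u (n + 2) + b n * u (n + 1) + c n * u n = 0)
    (hv : ∀ n, a n * v (n + 2) + b n * v (n + 1) + c n * v n = 0)
    (h₀ : u 0 = v 0) (h₁ : u 1 = v 1) : u = v := by
  suffices h : ∀ n, u n = v n ∧ u (n + 1) = v (n + 1) from funext fun n => (h n).1
  intro n
  induction n with
  | zero => exact ⟨h₀, h₁⟩
  | succ n ih =>
    refine ⟨ih.2, mul_left_cancel₀ (ha n) ?_⟩
    linear_combination hu n - hv n - b n * ih.2 - c n * ih.1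

theorem sum_recurrence_of_telescoping {R : Type*} [CommRing R] (a b c : ℕ → R)
    {F G : ℕ → ℕ → R} {S : ℕ → R} (hS : ∀ n, S n = ∑ k ∈ range (n + 1), F n k)
    (hF : ∀ {n k}, n < k → F n k = 0) (hG₀ : ∀ n, G n 0 = 0) (hG : ∀ n, G n (n + 3) = 0)
    (hFG : ∀ n k, a n * F (n + 2) k + b n * F (n + 1) k + c n * F n k = G n (k + 1) - G n k)
    (n : ℕ) : a n * S (n + 2) + b n * S (n + 1) + c n * S n = 0 := by
  have hS' : ∀ m ≤ n + 2, S m = ∑ k ∈ range (n + 3), F m k := fun m hm => by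
    rw [hS]
    exact sum_subset (range_subset_range.2 (by omega)) fun k _ hk =>
      hF (by rw [mem_range] at hk; omega)
  rw [hS' (n + 2) le_rfl, hS' (n + 1) (by omega), hS' n (by omega), mul_sum, mul_sum, mul_sum,
    ← sum_add_distrib, ← sum_add_distrib, sum_congr rfl fun k _ => hFG n k, sum_range_sub (G n),
    hG, hG₀, sub_zero]

lemma two_mul_add_one_ne_zero (z : ℤ) : 2 * (z : ℚ) + 1 ≠ 0 := by
  exact_mod_cast (by omega : 2 * z + 1 ≠ 0)

def dombSummand (n k : ℕ) : ℚ :=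
  (n.choose k : ℚ) ^ 2 * ((2 * k).choose k : ℚ) * ((2 * n - 2 * k).choose (n - k) : ℚ)

lemma dombSummand_add (k m : ℕ) :
    dombSummand (k + m) k = (k + m)! ^ 2 * (2 * k)! * (2 * m)! / (k ! ^ 4 * m ! ^ 4) := by
  rw [dombSummand, show 2 * (k + m) - 2 * k = 2 * m by omega, Nat.add_sub_cancel_left,
    Nat.cast_add_choose, two_mul k, two_mul m, Nat.cast_add_choose, Nat.cast_add_choose]
  field_simp

lemma dombSummand_eq_zero {n k : ℕ} (h : n < k) : dombSummand n k = 0 := by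
  simp [dombSummand, Nat.choose_eq_zero_of_lt h]

/- The two shift relations hold for all `n` and `k`, including the range where the summands
vanish, so the certificate identity below needs no case distinction. -/
lemma dombSummand_eq_mul_succ_left (n k : ℕ) :
    dombSummand n k
      = ((n : ℚ) + 1 - k) ^ 3 / (2 * ((n : ℚ) + 1) ^ 2 * (2 * n - 2 * k + 1))
        * dombSummand (n + 1) k := by
  have : 2 * (n : ℚ) - 2 * k + 1 ≠ 0 := by
    convert two_mul_add_one_ne_zero (n - k) using 1; push_cast; ring
  rw [div_mul_eq_mul_div, eq_div_iff (by positivity)]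
  obtain hkn | rfl | hnk := lt_trichotomy k (n + 1)
  · obtain ⟨m, rfl⟩ := Nat.exists_eq_add_of_le (Nat.lt_succ_iff.mp hkn)
    rw [add_assoc k m 1, dombSummand_add, dombSummand_add, ← add_assoc]
    simp only [cast_add, factorial_succ, cast_mul, cast_one, mul_succ, cast_ofNat]
    field_simp
    ring
  · simp [dombSummand_eq_zero (Nat.lt_succ_self n)]
  · simp [dombSummand_eq_zero hnk, dombSummand_eq_zero (Nat.lt_of_succ_lt hnk)]

lemma dombSummand_succ_succ (n k : ℕ) :
    dombSummand (n + 1) (k + 1)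
      = 2 * ((n : ℚ) + 1) ^ 2 * (2 * k + 1) / ((k : ℚ) + 1) ^ 3 * dombSummand n k := by
  rw [div_mul_eq_mul_div, eq_div_iff (by positivity)]
  obtain hkn | hnk := le_or_gt k n
  · obtain ⟨m, rfl⟩ := Nat.exists_eq_add_of_le hkn
    rw [add_right_comm, dombSummand_add, dombSummand_add, add_right_comm k 1 m]
    simp only [factorial_succ, cast_mul, cast_add, cast_one, mul_succ, cast_ofNat]
    field_simp
    ring
  · simp [dombSummand_eq_zero hnk, dombSummand_eq_zero (Nat.succ_lt_succ hnk)]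

/- The rational factor of the certificate produced by Zeilberger's algorithm. -/
def dombCertRatio (x y : ℚ) : ℚ :=
  -y ^ 3 * (56 - 186 * y + 178 * y ^ 2 - 64 * y ^ 3 + 8 * y ^ 4
      + x * (328 - 817 * y + 612 * y ^ 2 - 172 * y ^ 3 + 16 * y ^ 4)
      + x ^ 2 * (758 - 1404 * y + 778 * y ^ 2 - 152 * y ^ 3 + 8 * y ^ 4)
      + x ^ 3 * (892 - 1177 * y + 432 * y ^ 2 - 44 * y ^ 3)
      + x ^ 4 * (566 - 480 * y + 88 * y ^ 2) + x ^ 5 * (184 - 76 * y) + 24 * x ^ 6)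
    / ((x + 1) ^ 2 * (x + 2) ^ 2 * (2 * x - 2 * y + 1) * (2 * x - 2 * y + 3))

def dombCertificate (n k : ℕ) : ℚ := dombCertRatio n k * dombSummand (n + 2) k

lemma dombSummand_telescoping (n k : ℕ) :
    ((n : ℚ) + 2) ^ 3 * dombSummand (n + 2) k
      + -2 * (2 * (n : ℚ) + 3) * (5 * n ^ 2 + 15 * n + 12) * dombSummand (n + 1) k
      + 64 * ((n : ℚ) + 1) ^ 3 * dombSummand n k
      = dombCertificate n (k + 1) - dombCertificate n k := by
  rw [dombCertificate, dombCertificate, dombCertRatio, dombCertRatio,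
    dombSummand_succ_succ (n + 1), dombSummand_eq_mul_succ_left n,
    dombSummand_eq_mul_succ_left (n + 1), show n + 1 + 1 = n + 2 from rfl]
  push_cast
  rw [show 2 * ((n : ℚ) + 1) - 2 * k + 1 = 2 * n - 2 * k + 3 by ring,
    show 2 * (n : ℚ) - 2 * (k + 1) + 3 = 2 * n - 2 * k + 1 by ring,
    show 2 * (n : ℚ) - 2 * (k + 1) + 1 = 2 * n - 2 * k - 1 by ring,
    show (n : ℚ) + 1 + 1 = n + 2 by ring]
  have h₁ : 2 * ((n : ℚ) - k) + 1 ≠ 0 := by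
    convert two_mul_add_one_ne_zero (n - k) using 1; push_cast; ring
  have h₃ : 2 * ((n : ℚ) - k) + 3 ≠ 0 := by
    convert two_mul_add_one_ne_zero (n - k + 1) using 1; push_cast; ring
  have h₀ : 2 * ((n : ℚ) - k) - 1 ≠ 0 := by
    convert two_mul_add_one_ne_zero (n - k - 1) using 1; push_cast; ring
  field_simp
  ring

def chanZudilinSummand (n k : ℕ) : ℚ :=
  (-1) ^ k * ((n + 2 * k).choose (3 * k) : ℚ) * ((2 * k).choose k : ℚ) ^ 2 *
    ((3 * k).choose k : ℚ) * 16 ^ (n - k)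

lemma chanZudilinSummand_add (k m : ℕ) :
    chanZudilinSummand (k + m) k
      = (-1) ^ k * (3 * k + m)! * (2 * k)! * 16 ^ m / (k ! ^ 5 * m !) := by
  rw [chanZudilinSummand, show k + m + 2 * k = 3 * k + m by ring, Nat.add_sub_cancel_left,
    Nat.cast_add_choose, Nat.cast_choose ℚ (by omega : k ≤ 2 * k),
    Nat.cast_choose ℚ (by omega : k ≤ 3 * k), show 2 * k - k = k by omega,
    show 3 * k - k = 2 * k by omega]
  field_simp

lemma chanZudilinSummand_eq_zero {n k : ℕ} (h : n < k) : chanZudilinSummand n k = 0 := by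
  simp [chanZudilinSummand, Nat.choose_eq_zero_of_lt (by omega : n + 2 * k < 3 * k)]

lemma chanZudilinSummand_eq_mul_succ_left (n k : ℕ) :
    chanZudilinSummand n k
      = ((n : ℚ) + 1 - k) / (16 * (n + 2 * k + 1)) * chanZudilinSummand (n + 1) k := by
  rw [div_mul_eq_mul_div, eq_div_iff (by positivity)]
  obtain hkn | rfl | hnk := lt_trichotomy k (n + 1)
  · obtain ⟨m, rfl⟩ := Nat.exists_eq_add_of_le (Nat.lt_succ_iff.mp hkn)
    rw [add_assoc k m 1, chanZudilinSummand_add, chanZudilinSummand_add, ← add_assoc]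
    simp only [pow_succ, pow_zero, one_mul, cast_add, factorial_succ, cast_mul, cast_ofNat, cast_one]
    field_simp
    ring
  · simp [chanZudilinSummand_eq_zero (Nat.lt_succ_self n)]
  · simp [chanZudilinSummand_eq_zero hnk, chanZudilinSummand_eq_zero (Nat.lt_of_succ_lt hnk)]

lemma chanZudilinSummand_succ_succ (n k : ℕ) :
    chanZudilinSummand (n + 1) (k + 1)
      = -2 * (2 * (k : ℚ) + 1) * (n + 2 * k + 1) * (n + 2 * k + 2) * (n + 2 * k + 3)
        / ((k : ℚ) + 1) ^ 4 * chanZudilinSummand n k := by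
  rw [div_mul_eq_mul_div, eq_div_iff (by positivity)]
  obtain hkn | hnk := le_or_gt k n
  · obtain ⟨m, rfl⟩ := Nat.exists_eq_add_of_le hkn
    rw [add_right_comm, chanZudilinSummand_add, chanZudilinSummand_add,
      show 3 * (k + 1) + m = 3 * k + m + 1 + 1 + 1 by ring]
    simp only [pow_succ, mul_neg, mul_one, factorial_succ, cast_mul, cast_add, cast_ofNat, cast_one, neg_mul,
      mul_succ, pow_zero, one_mul]
    field_simp
    ring
  · simp [chanZudilinSummand_eq_zero hnk, chanZudilinSummand_eq_zero (Nat.succ_lt_succ hnk)]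

def chanZudilinCertificate (n k : ℕ) : ℚ :=
  -3 * (k : ℚ) ^ 4 * (3 * n + 5) / ((n + 2 * k + 1) * (n + 2 * k + 2))
    * chanZudilinSummand (n + 2) k

lemma chanZudilinSummand_telescoping (n k : ℕ) :
    ((n : ℚ) + 2) ^ 3 * chanZudilinSummand (n + 2) k
      + -2 * (2 * (n : ℚ) + 3) * (5 * n ^ 2 + 15 * n + 12) * chanZudilinSummand (n + 1) k
      + 64 * ((n : ℚ) + 1) ^ 3 * chanZudilinSummand n k
      = chanZudilinCertificate n (k + 1) - chanZudilinCertificate n k := by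
  rw [chanZudilinCertificate, chanZudilinCertificate, chanZudilinSummand_succ_succ (n + 1),
    chanZudilinSummand_eq_mul_succ_left n, chanZudilinSummand_eq_mul_succ_left (n + 1),
    show n + 1 + 1 = n + 2 from rfl]
  push_cast
  field_simp
  ring

theorem stmt_12 (n : ℕ) :
    ∑ k ∈ Finset.range (n + 1),
        ((n.choose k : ℤ) ^ 2 * ((2 * k).choose k : ℤ) * ((2 * n - 2 * k).choose (n - k) : ℤ))
      = ∑ k ∈ Finset.range (n + 1),
        ((-1) ^ k * ((n + 2 * k).choose (3 * k) : ℤ) * ((2 * k).choose k : ℤ) ^ 2 *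
          ((3 * k).choose k : ℤ) * 16 ^ (n - k)) := by
  have key := eq_of_linear_recurrence (a := fun n : ℕ => ((n : ℚ) + 2) ^ 3)
    (b := fun n : ℕ => -2 * (2 * (n : ℚ) + 3) * (5 * n ^ 2 + 15 * n + 12))
    (c := fun n : ℕ => 64 * ((n : ℚ) + 1) ^ 3) (fun n => by positivity)
    (sum_recurrence_of_telescoping _ _ _ (fun _ => rfl) dombSummand_eq_zero
      (fun _ => by simp [dombCertificate, dombCertRatio])
      (fun _ => by simp [dombCertificate, dombSummand_eq_zero])
      dombSummand_telescoping)
    (sum_recurrence_of_telescoping _ _ _ (fun _ => rfl) chanZudilinSummand_eq_zero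
      (fun _ => by simp [chanZudilinCertificate])
      (fun _ => by simp [chanZudilinCertificate, chanZudilinSummand_eq_zero])
      chanZudilinSummand_telescoping)
    (by simp [dombSummand, chanZudilinSummand])
    (by norm_num [sum_range_succ, dombSummand, chanZudilinSummand])
  have h := congrFun key n
  simp only [dombSummand, chanZudilinSummand] at h
  exact_mod_cast h
end

section
/- For every nonnegative integer n, ∑_{k=0}^{n} C(n,k)²·C(2k,k)·C(2n-2k, n-k) = ∑_{k=0}^{⌊n/2⌋} C(n+k, 3k)·C(2k,k)²·C(3k,k)·4^{n-2k}. -/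
/-!
Both sides satisfy Domb's recurrence
`(n+2)³ u(n+2) - 2(2n+3)(5n²+15n+12) u(n+1) + 64(n+1)³ u(n) = 0`
and agree for `n = 0, 1`. The recurrences are proved by creative telescoping: applied to the
summand, the recurrence operator becomes a difference `G(k+1, ·) - G(k, ·)` of a certificate `G`
(a rational multiple of the summand, found by Zeilberger's algorithm), and after summation only
boundary terms survive. Writing the summands as functions of `(k, b)` with `n = k + b`, resp.
`n = 2k + b`, keeps truncated subtraction out of the certificate identities, which become
identities of rational functions once the binomials are expanded into factorials.
-/

open Finset
open scoped Nat

def dombRec (n x₀ x₁ x₂ : ℚ) : ℚ :=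
  (n + 2) ^ 3 * x₂ - 2 * (2 * n + 3) * (5 * n ^ 2 + 15 * n + 12) * x₁ + 64 * (n + 1) ^ 3 * x₀

lemma dombRec_add (n x₀ x₁ x₂ y₀ y₁ y₂ : ℚ) :
    dombRec n (x₀ + y₀) (x₁ + y₁) (x₂ + y₂)
      = dombRec n x₀ x₁ x₂ + dombRec n y₀ y₁ y₂ := by
  simp only [dombRec]; ring

lemma dombRec_sum {ι : Type*} (s : Finset ι) (n : ℚ) (f₀ f₁ f₂ : ι → ℚ) :
    dombRec n (∑ i ∈ s, f₀ i) (∑ i ∈ s, f₁ i) (∑ i ∈ s, f₂ i)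
      = ∑ i ∈ s, dombRec n (f₀ i) (f₁ i) (f₂ i) := by
  simp only [dombRec, mul_sum, ← sum_sub_distrib, ← sum_add_distrib]

lemma eq_of_dombRec {u v : ℕ → ℚ}
    (hu : ∀ n : ℕ, dombRec n (u n) (u (n + 1)) (u (n + 2)) = 0)
    (hv : ∀ n : ℕ, dombRec n (v n) (v (n + 1)) (v (n + 2)) = 0)
    (h₀ : u 0 = v 0) (h₁ : u 1 = v 1) (n : ℕ) : u n = v n := by
  suffices ∀ n, u n = v n ∧ u (n + 1) = v (n + 1) from (this n).1
  intro n
  induction n with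
  | zero => exact ⟨h₀, h₁⟩
  | succ n ih =>
    refine ⟨ih.2, ?_⟩
    have h := (hu n).trans (hv n).symm
    rw [ih.1, ih.2] at h
    simp only [dombRec, add_left_inj, sub_left_inj] at h
    exact mul_left_cancel₀ (by positivity) h

lemma sum_dombRec_telescope (s : ℕ) {F G : ℕ → ℕ → ℚ} (hG : ∀ b, G 0 b = 0)
    (hFG : ∀ k c, dombRec (s * k + c + s : ℕ) (F k (c + s)) (F k (c + s + 1)) (F k (c + s + 2))
      = G (k + 1) c - G k (c + s))
    {m N : ℕ} (h : s * m ≤ N) :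
    ∑ k ∈ range m, dombRec N (F k (N - s * k)) (F k (N + 1 - s * k)) (F k (N + 2 - s * k))
      = G m (N - s * m) := by
  have hterm : ∀ k ∈ range m,
      dombRec N (F k (N - s * k)) (F k (N + 1 - s * k)) (F k (N + 2 - s * k))
        = G (k + 1) (N - s * (k + 1)) - G k (N - s * k) := by
    intro k hk
    have hk : s * (k + 1) ≤ N := le_trans (Nat.mul_le_mul_left s (mem_range.mp hk)) h
    obtain ⟨c, rfl⟩ := Nat.exists_eq_add_of_le hk
    rw [mul_add, mul_one, show s * k + s + c - s * k = c + s by omega,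
      show s * k + s + c + 1 - s * k = c + s + 1 by omega,
      show s * k + s + c + 2 - s * k = c + s + 2 by omega,
      show s * k + s + c - (s * k + s) = c by omega, show s * k + s + c = s * k + c + s by omega]
    exact hFG k c
  rw [sum_congr rfl hterm, sum_range_sub (fun k ↦ G k (N - s * k)), hG, sub_zero]

def dombTerm (k b : ℕ) : ℚ := ((k + b).choose k) ^ 2 * (2 * k).choose k * (2 * b).choose b

lemma dombTerm_eq_factorial (k b : ℕ) :
    dombTerm k b = (k + b)! ^ 2 * (2 * k)! * (2 * b)! / (k ! ^ 4 * b ! ^ 4) := by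
  simp only [dombTerm, two_mul, Nat.cast_add_choose]
  field_simp

def sunTerm (k b : ℕ) : ℚ :=
  (3 * k + b).choose (3 * k) * ((2 * k).choose k) ^ 2 * (3 * k).choose k * 4 ^ b

lemma sunTerm_eq_factorial (k b : ℕ) :
    sunTerm k b = (3 * k + b)! * (2 * k)! * 4 ^ b / (b ! * k ! ^ 5) := by
  rw [sunTerm, Nat.cast_add_choose, Nat.cast_choose ℚ (by omega : k ≤ 3 * k),
    show 3 * k - k = 2 * k by omega, two_mul, Nat.cast_add_choose]
  field_simp

def dombCert (k b : ℕ) : ℚ :=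
  let n : ℚ := k + b
  k ^ 3 * (2 * n + 1 - 2 * k) *
    (-224 + 296 * k - 120 * k ^ 2 + 16 * k ^ 3 - 864 * n + 948 * n * k - 312 * n * k ^ 2
      + 32 * n * k ^ 3 - 1304 * n ^ 2 + 1112 * n ^ 2 * k - 264 * n ^ 2 * k ^ 2 + 16 * n ^ 2 * k ^ 3
      - 960 * n ^ 3 + 564 * n ^ 3 * k - 72 * n ^ 3 * k ^ 2 - 344 * n ^ 4 + 104 * n ^ 4 * k
      - 48 * n ^ 5)
    * dombTerm k b / ((b + 1) ^ 3 * (b + 2) ^ 3)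

def sunCert (k b : ℕ) : ℚ :=
  -192 * k ^ 4 * (6 * k + 3 * b + 4) * sunTerm k b / ((b + 1) * (b + 2))

lemma dombRec_dombTerm (k c : ℕ) :
    dombRec (k + c + 1) (dombTerm k (c + 1)) (dombTerm k (c + 2)) (dombTerm k (c + 3))
      = dombCert (k + 1) c - dombCert k (c + 1) := by
  simp only [dombCert, dombTerm_eq_factorial, dombRec, ← add_assoc, mul_add, Nat.reduceMul,
    add_right_comm k 1 c, Nat.factorial_succ]
  push_cast
  field_simp
  ring

lemma dombRec_sunTerm (k b : ℕ) :
    dombRec (2 * k + b + 2) (sunTerm k (b + 2)) (sunTerm k (b + 3)) (sunTerm k (b + 4))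
      = sunCert (k + 1) b - sunCert k (b + 2) := by
  simp only [sunCert, sunTerm_eq_factorial, dombRec, ← add_assoc, mul_add, Nat.reduceMul,
    pow_succ, add_right_comm _ 3 b, Nat.factorial_succ]
  push_cast
  field_simp
  ring

-- The terms left over by the telescoping: the summand with the smallest `b`, and the summands of
-- the longer sums at levels `n + 1`, `n + 2` that have no counterpart at level `n`.
lemma dombRec_dombTerm_boundary (n : ℕ) :
    dombCert n 0 + dombRec n (dombTerm n 0) (dombTerm n 1 + dombTerm (n + 1) 0)
      (dombTerm n 2 + dombTerm (n + 1) 1 + dombTerm (n + 2) 0) = 0 := by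
  simp only [dombCert, dombTerm_eq_factorial, dombRec, mul_add, Nat.reduceMul, add_zero,
    mul_zero, Nat.factorial_zero, Nat.factorial_succ]
  push_cast
  field_simp
  ring

lemma dombRec_sunTerm_boundary_even (m : ℕ) :
    sunCert m 0 + dombRec (2 * m) (sunTerm m 0) (sunTerm m 1) (sunTerm m 2 + sunTerm (m + 1) 0)
      = 0 := by
  simp only [sunCert, sunTerm_eq_factorial, dombRec, mul_add, Nat.reduceMul, add_zero,
    Nat.factorial_zero, pow_succ, Nat.factorial_succ]
  push_cast
  field_simp
  ring

lemma dombRec_sunTerm_boundary_odd (m : ℕ) :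
    sunCert m 1 + dombRec (2 * m + 1) (sunTerm m 1) (sunTerm m 2 + sunTerm (m + 1) 0)
      (sunTerm m 3 + sunTerm (m + 1) 1) = 0 := by
  simp only [sunCert, sunTerm_eq_factorial, dombRec, mul_add, Nat.reduceMul, add_zero,
    Nat.factorial_zero, pow_succ, Nat.factorial_succ]
  push_cast
  field_simp
  ring

def dombSum (n : ℕ) : ℚ := ∑ k ∈ range (n + 1), dombTerm k (n - k)

def sunSum (n : ℕ) : ℚ := ∑ k ∈ range (n / 2 + 1), sunTerm k (n - 2 * k)

lemma dombRec_dombSum (n : ℕ) :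
    dombRec n (dombSum n) (dombSum (n + 1)) (dombSum (n + 2)) = 0 := by
  have h₀ : dombSum n = ∑ k ∈ range n, dombTerm k (n - k) + dombTerm n 0 := by
    simp [dombSum, sum_range_succ]
  have h₁ : dombSum (n + 1)
      = ∑ k ∈ range n, dombTerm k (n + 1 - k) + (dombTerm n 1 + dombTerm (n + 1) 0) := by
    simp [dombSum, sum_range_succ, add_assoc]
  have h₂ : dombSum (n + 2) = ∑ k ∈ range n, dombTerm k (n + 2 - k)
      + (dombTerm n 2 + dombTerm (n + 1) 1 + dombTerm (n + 2) 0) := by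
    simp [dombSum, sum_range_succ, add_assoc]
  have htel := sum_dombRec_telescope 1 (F := dombTerm) (G := dombCert) (by simp [dombCert])
    (fun k c ↦ by simpa [add_assoc] using dombRec_dombTerm k c) (m := n) (N := n) (by simp)
  simp only [one_mul, Nat.sub_self] at htel
  rw [h₀, h₁, h₂, dombRec_add, dombRec_sum, htel]
  exact dombRec_dombTerm_boundary n

lemma sunSum_eq_sum_add (n m r : ℕ) (h : n = 2 * m + r) (hr : r < 2) :
    sunSum n = ∑ k ∈ range m, sunTerm k (n - 2 * k) + sunTerm m r := by
  rw [sunSum, show n / 2 = m by omega, sum_range_succ, show n - 2 * m = r by omega]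

lemma sunSum_eq_sum_add_add (n m r : ℕ) (h : n = 2 * m + 2 + r) (hr : r < 2) :
    sunSum n
      = ∑ k ∈ range m, sunTerm k (n - 2 * k) + (sunTerm m (r + 2) + sunTerm (m + 1) r) := by
  rw [sunSum_eq_sum_add n (m + 1) r (by omega) hr, sum_range_succ, add_assoc,
    show n - 2 * m = r + 2 by omega]

lemma dombRec_sunSum (n : ℕ) :
    dombRec n (sunSum n) (sunSum (n + 1)) (sunSum (n + 2)) = 0 := by
  have htel := fun N m ↦ sum_dombRec_telescope 2 (F := sunTerm) (G := sunCert) (by simp [sunCert])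
    (fun k c ↦ by simpa [add_assoc] using dombRec_sunTerm k c) (m := m) (N := N)
  obtain ⟨m, rfl | rfl⟩ := Nat.even_or_odd' n
  · rw [sunSum_eq_sum_add (2 * m) m 0 rfl two_pos,
      sunSum_eq_sum_add (2 * m + 1) m 1 rfl one_lt_two,
      sunSum_eq_sum_add_add (2 * m + 2) m 0 rfl two_pos,
      dombRec_add, dombRec_sum, htel _ _ le_rfl]
    simpa using dombRec_sunTerm_boundary_even m
  · rw [sunSum_eq_sum_add (2 * m + 1) m 1 rfl one_lt_two,
      sunSum_eq_sum_add_add (2 * m + 1 + 1) m 0 rfl two_pos,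
      sunSum_eq_sum_add_add (2 * m + 1 + 2) m 1 rfl one_lt_two,
      dombRec_add, dombRec_sum, htel _ _ (by omega)]
    simpa using dombRec_sunTerm_boundary_odd m

lemma dombSum_eq_sunSum (n : ℕ) : dombSum n = sunSum n :=
  eq_of_dombRec dombRec_dombSum dombRec_sunSum
    (by norm_num [dombSum, sunSum, dombTerm, sunTerm])
    (by norm_num [dombSum, sunSum, dombTerm, sunTerm, sum_range_succ]) n

theorem stmt_13 (n : ℕ) :
    ∑ k ∈ Finset.range (n + 1),
        (n.choose k) ^ 2 * ((2 * k).choose k) * ((2 * n - 2 * k).choose (n - k))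
      = ∑ k ∈ Finset.range (n / 2 + 1),
        ((n + k).choose (3 * k)) * ((2 * k).choose k) ^ 2 * ((3 * k).choose k) * 4 ^ (n - 2 * k) := by
  have hlhs : dombSum n = ((∑ k ∈ range (n + 1),
      (n.choose k) ^ 2 * ((2 * k).choose k) * ((2 * n - 2 * k).choose (n - k)) : ℕ) : ℚ) := by
    push_cast
    refine sum_congr rfl fun k hk ↦ ?_
    have hk : k ≤ n := Nat.lt_succ_iff.mp (mem_range.mp hk)
    rw [dombTerm, Nat.add_sub_cancel' hk, Nat.mul_sub]
  have hrhs : sunSum n = ((∑ k ∈ range (n / 2 + 1), ((n + k).choose (3 * k))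
      * ((2 * k).choose k) ^ 2 * ((3 * k).choose k) * 4 ^ (n - 2 * k) : ℕ) : ℚ) := by
    push_cast
    refine sum_congr rfl fun k hk ↦ ?_
    have hk : 2 * k ≤ n := by have := mem_range.mp hk; omega
    rw [sunTerm, show 3 * k + (n - 2 * k) = n + k by omega]
  exact_mod_cast hlhs.symm.trans ((dombSum_eq_sunSum n).trans hrhs)
end

section
/- Let p > 3 be a prime with p ≡ 1 (mod 3). Then C(2p-2, (2p-2)/3)·C(p + (4p-4)/3, 2p-1) ≡ -2p (mod p²). -/
open Finset Nat

/-! Write `p = 3k + 1`. By Lucas, `C(2p-2, 2k) ≡ C(p-2, 2k) ≡ 2k + 1 ≡ -k (mod p)`. The second factor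
is `C(7k+1, k)`, and `k! C(7k+1, k) = 2p (2p+1) ⋯ (2p+k-1) ≡ 2p (k-1)! (mod p²)`. Hence the product
times `k!` is `≡ -2p k! (mod p²)`, and `k!` is prime to `p`. -/

theorem Int.ModEq.cancel_left_of_isCoprime {m c a b : ℤ} (hmc : IsCoprime m c)
    (h : c * a ≡ c * b [ZMOD m]) : a ≡ b [ZMOD m] := by
  rw [Int.modEq_iff_dvd, ← mul_sub] at h
  exact Int.modEq_iff_dvd.2 (hmc.dvd_of_dvd_mul_left h)

theorem prod_range_succ_add_modEq {a n : ℤ} (h : n ∣ a) (m : ℕ) :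
    ∏ i ∈ range (m + 1), (a + i) ≡ a * m ! [ZMOD a * n] := by
  have htail : ∏ i ∈ range m, (a + (i + 1 : ℕ)) ≡ ∏ i ∈ range m, (0 + (i + 1 : ℕ)) [ZMOD n] :=
    Int.ModEq.prod fun i _ => (Int.modEq_zero_iff_dvd.2 h).add_right _
  rw [prod_range_succ', ← prod_range_add_one_eq_factorial, Nat.cast_zero, add_zero, mul_comm _ a]
  push_cast at htail ⊢
  simpa using htail.mul_left' (c := a)

theorem Finset.prod_range_add_two_eq_factorial (n : ℕ) : ∏ i ∈ range n, (i + 2) = (n + 1)! := by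
  simpa using (prod_range_succ' (· + 1) n).symm.trans (prod_range_add_one_eq_factorial (n + 1))

theorem ZMod.natCast_choose_prime_sub_two {p : ℕ} [hp : Fact p.Prime] {j : ℕ} (hj : j ≤ p - 2) :
    ((p - 2).choose j : ZMod p) = (-1) ^ j * (j + 1) := by
  have hfact : (j ! : ZMod p) ≠ 0 := by
    rw [Ne, ZMod.natCast_eq_zero_iff, hp.out.dvd_factorial]
    have := hp.out.two_le
    omega
  have hterm : ∀ i ∈ range j, ((p - 2 - i : ℕ) : ZMod p) = -1 * ((i + 2 : ℕ) : ZMod p) := by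
    intro i hi
    have hsum : ((p - 2 - i + (i + 2) : ℕ) : ZMod p) = 0 := by
      rw [show p - 2 - i + (i + 2) = p by have := mem_range.1 hi; omega, ZMod.natCast_self]
    push_cast at hsum ⊢
    linear_combination hsum
  have hdesc : ((p - 2).descFactorial j : ZMod p) = (-1) ^ j * (j + 1) * j ! := by
    rw [descFactorial_eq_prod_range, Nat.cast_prod, prod_congr rfl hterm, prod_mul_distrib,
      prod_const, card_range, ← Nat.cast_prod, prod_range_add_two_eq_factorial, factorial_succ]
    push_cast
    ring
  rw [descFactorial_eq_factorial_mul_choose, Nat.cast_mul, mul_comm] at hdesc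
  exact mul_right_cancel₀ hfact hdesc

theorem choose_two_mul_prime_sub_two_modEq {p : ℕ} [hp : Fact p.Prime] {j : ℕ} (hj : j ≤ p - 2) :
    ((2 * p - 2).choose j : ℤ) ≡ (-1) ^ j * (j + 1) [ZMOD p] := by
  have hlucas := Choose.choose_modEq_choose_mod_mul_choose_div (n := 2 * p - 2) (k := j) (p := p)
  have h2 := hp.out.two_le
  have hmod : (2 * p - 2) % p = p - 2 := by
    rw [show 2 * p - 2 = (p - 2) + p * 1 by omega, add_mul_mod_self_left, mod_eq_of_lt (by omega)]
  have hdiv : (2 * p - 2) / p = 1 := by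
    rw [show 2 * p - 2 = (p - 2) + p * 1 by omega, add_mul_div_left _ _ (by omega),
      div_eq_of_lt (by omega)]
  rw [hmod, hdiv, mod_eq_of_lt (by omega), div_eq_of_lt (by omega), choose_zero_right,
    Nat.cast_one, mul_one] at hlucas
  refine hlucas.trans ((ZMod.intCast_eq_intCast_iff _ _ _).1 ?_)
  push_cast
  exact ZMod.natCast_choose_prime_sub_two hj

theorem stmt_16 (p : ℕ) (hp : p.Prime) (hp3 : 3 < p) (hp1 : p % 3 = 1) :
    (((2 * p - 2).choose ((2 * p - 2) / 3) : ℤ) * ((p + (4 * p - 4) / 3).choose (2 * p - 1) : ℤ))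
      ≡ -2 * p [ZMOD (p : ℤ) ^ 2] := by
  have := Fact.mk hp
  obtain ⟨m, hm⟩ : ∃ m, p = 3 * (m + 1) + 1 := ⟨p / 3 - 1, by omega⟩
  set k := m + 1 with hk
  rw [show (2 * p - 2) / 3 = 2 * k by omega, show p + (4 * p - 4) / 3 = (6 * k + 1) + k by omega,
    show 2 * p - 1 = 6 * k + 1 by omega, choose_symm_add]
  set A : ℤ := ↑((2 * p - 2).choose (2 * k))
  set B : ℤ := ↑((6 * k + 1 + k).choose k)
  have hA : A ≡ -k [ZMOD p] := by
    refine (choose_two_mul_prime_sub_two_modEq (by omega)).trans (Int.modEq_iff_dvd.2 ⟨-1, ?_⟩)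
    rw [pow_mul, neg_one_sq, one_pow, hm]
    push_cast
    ring
  have hB : (k ! : ℤ) * B ≡ 2 * p * m ! [ZMOD p ^ 2] := by
    have hprod : (k ! : ℤ) * B = ∏ i ∈ range (m + 1), (2 * p + i : ℤ) := by
      have := ascFactorial_eq_factorial_mul_choose (6 * k + 1) k
      rw [ascFactorial_eq_prod_range] at this
      rw [← Nat.cast_mul, ← this, Nat.cast_prod]
      refine prod_congr rfl fun i _ => ?_
      push_cast
      omega
    rw [hprod]
    exact (prod_range_succ_add_modEq (dvd_mul_left _ _) m).of_dvd ⟨2, by ring⟩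
  have hmain : (k ! : ℤ) * (A * B) ≡ k ! * (-2 * p) [ZMOD p ^ 2] :=
    calc (k ! : ℤ) * (A * B) = A * (k ! * B) := by ring
      _ ≡ A * (2 * p * m !) [ZMOD p ^ 2] := hB.mul_left _
      _ ≡ -k * (2 * p * m !) [ZMOD p ^ 2] :=
        (hA.mul_right' (c := 2 * p * m !)).of_dvd ⟨2 * m !, by ring⟩
      _ = k ! * (-2 * p) := by rw [hk, factorial_succ]; push_cast; ring
  have hcop : IsCoprime (p : ℤ) (k ! : ℤ) :=
    Nat.isCoprime_iff_coprime.2 <| hp.coprime_iff_not_dvd.2 fun h => by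
      have := hp.dvd_factorial.1 h
      omega
  exact hmain.cancel_left_of_isCoprime hcop.pow_left
end
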